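/- arXiv:2409.11723 — 8 statements merged into one kernel-verified Lean document; each statement's English description precedes it below -/
import Mathlib

section
/- Let G be a 2-connected factor-critical graph with nearly perfect matching M exposing vertex v. Then for every edge e = (u,v) incident to the exposed vertex v, G contains an odd cycle through e that is M-alternating (i.e., the cycle alternates between matching and non-matching edges except at v). -/
open SimpleGraph

/-- A graph is factor-critical if every vertex is exposed by some nearly perfect
matching. -/
def FactorCritical {V : Type*} (G : SimpleGraph V) : Prop :=
  ∀ v : V, ∃ M : G.Subgraph, M.IsMatching ∧ M.verts = ({v}ᶜ : Set V)

/-- A graph on at least 3 vertices is 2-connected if it is connected and removing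
any single vertex leaves it connected. -/
def TwoConnected {V : Type*} [Fintype V] (G : SimpleGraph V) : Prop :=
  3 ≤ Fintype.card V ∧ G.Connected ∧
    ∀ v : V, (G.induce ({v}ᶜ : Set V)).Connected

/-!
Let `M'` be a matching exposing `u`, which exists by factor-criticality. In `M ∆ M'` the
vertices `u` and `v` have degree one and every other vertex has degree zero or two, so adding
the edge `vu` yields a disjoint union of cycles; hence `u` and `v` are joined by a path in
`M ∆ M'`. Along it the edges alternate between `M` and `M'`, and the first one, at `u`, lies in
`M`. Closing the path with `vu` gives a cycle through `v` whose first and last edges avoid `M`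
(they meet `v`), so alternation forces its length to be odd.
-/
open scoped symmDiff

theorem List.IsChain.odd_length_iff {α : Type*} {P : α → Prop} :
    ∀ {l : List α}, l.IsChain (fun x y => P x ≠ P y) → ∀ hne : l ≠ [],
      (Odd l.length ↔ (P (l.head hne) ↔ P (l.getLast hne)))
  | [], _, hne => absurd rfl hne
  | [a], _, _ => by simp
  | a :: b :: l, hl, _ => by
    obtain ⟨hab, hl⟩ := List.isChain_cons_cons.mp hl
    have ih := hl.odd_length_iff (List.cons_ne_nil b l)
    simp only [List.head_cons, List.getLast_cons_cons, List.length_cons] at ih ⊢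
    rw [Nat.odd_add_one, ih]
    tauto

namespace SimpleGraph

variable {V : Type*} {G G' : SimpleGraph V}

theorem IsAlternating.isChain_edges {K : SimpleGraph V} (halt : K.IsAlternating G') :
    ∀ {a b : V} (p : K.Walk a b), p.IsTrail →
      p.edges.IsChain (fun e f => (e ∈ G'.edgeSet) ≠ (f ∈ G'.edgeSet))
  | _, _, .nil, _ => List.IsChain.nil
  | _, _, .cons _ .nil, _ => List.isChain_singleton _
  | a, _, .cons (v := b) hab (.cons (v := c) hbc p), hp => by
    have hac : a ≠ c := by
      rintro rfl
      simp [Walk.edges_cons, Sym2.eq_swap] at hp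
    have htail : (Walk.cons hbc p).IsTrail := hp.of_cons
    rw [Walk.edges_cons, Walk.edges_cons, List.isChain_cons_cons]
    refine ⟨?_, halt.isChain_edges _ htail⟩
    have halt_b := halt hac hab.symm hbc
    rw [G'.adj_comm] at halt_b
    simp only [mem_edgeSet, ne_eq]
    tauto

theorem Subgraph.not_adj_of_verts_eq_compl_singleton {N : Subgraph G} {v : V}
    (h : N.verts = {v}ᶜ) (y : V) : ¬N.Adj v y :=
  fun hy => by simpa [h] using N.edge_vert hy

variable {M : Subgraph G} {M' : Subgraph G'}

theorem Subgraph.IsMatching.isAlternating_symmDiff_left (hM : M.IsMatching)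
    (hM' : M'.IsMatching) : (M.spanningCoe ∆ M'.spanningCoe).IsAlternating M.spanningCoe := by
  intro x w w' hww' hw hw'
  simp only [symmDiff_def, SimpleGraph.sup_adj, SimpleGraph.sdiff_adj,
    Subgraph.spanningCoe_adj] at hw hw' ⊢
  constructor
  · exact fun hxw hxw' => hww' (hM.eq_of_adj_left hxw hxw')
  · intro hxw'
    by_contra hxw
    exact hww' (hM'.eq_of_adj_left (u := x) (by tauto) (by tauto))

theorem Subgraph.IsMatching.exists_forall_adj_iff {N : Subgraph G} (hN : N.IsMatching) {w : V}
    (hw : w ∈ N.verts) : ∃ a, ∀ y, N.Adj w y ↔ y = a := by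
  obtain ⟨a, ha, huniq⟩ := hN hw
  exact ⟨a, fun y => ⟨huniq y, fun h => h ▸ ha⟩⟩

theorem Subgraph.IsMatching.isCycles_symmDiff_sup_edge {u v : V} (hM : M.IsMatching)
    (hM' : M'.IsMatching) (hMv : M.verts = {v}ᶜ) (hM'u : M'.verts = {u}ᶜ) (huv : u ≠ v) :
    (M.spanningCoe ∆ M'.spanningCoe ⊔ edge v u).IsCycles := by
  have hMv' := Subgraph.not_adj_of_verts_eq_compl_singleton hMv
  have hM'u' := Subgraph.not_adj_of_verts_eq_compl_singleton hM'u
  intro w hw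
  rw [Set.ncard_eq_two]
  by_cases hwv : w = v
  · obtain ⟨x, hx⟩ := hM'.exists_forall_adj_iff (w := v) (by simp [hM'u, huv.symm])
    have hxu : x ≠ u := fun h => hM'u' v (h ▸ ((hx x).mpr rfl).symm)
    refine ⟨x, u, hxu, Set.ext fun y => ?_⟩
    simp only [SimpleGraph.mem_neighborSet, symmDiff_def, SimpleGraph.sup_adj,
      SimpleGraph.sdiff_adj, Subgraph.spanningCoe_adj, edge_adj, Set.mem_insert_iff,
      Set.mem_singleton_iff, hwv, hx, hMv']
    grind
  by_cases hwu : w = u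
  · obtain ⟨x, hx⟩ := hM.exists_forall_adj_iff (w := u) (by simp [hMv, huv])
    have hxv : x ≠ v := fun h => hMv' u (h ▸ ((hx x).mpr rfl).symm)
    refine ⟨x, v, hxv, Set.ext fun y => ?_⟩
    simp only [SimpleGraph.mem_neighborSet, symmDiff_def, SimpleGraph.sup_adj,
      SimpleGraph.sdiff_adj, Subgraph.spanningCoe_adj, edge_adj, Set.mem_insert_iff,
      Set.mem_singleton_iff, hwu, hx, hM'u']
    grind
  obtain ⟨a, ha⟩ := hM.exists_forall_adj_iff (w := w) (by simp [hMv, hwv])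
  obtain ⟨b, hb⟩ := hM'.exists_forall_adj_iff (w := w) (by simp [hM'u, hwu])
  simp only [Set.Nonempty, SimpleGraph.mem_neighborSet, symmDiff_def, SimpleGraph.sup_adj,
    SimpleGraph.sdiff_adj, Subgraph.spanningCoe_adj, edge_adj, ha, hb] at hw
  have hab : a ≠ b := by
    rintro rfl
    grind
  refine ⟨a, b, hab, Set.ext fun y => ?_⟩
  simp only [SimpleGraph.mem_neighborSet, symmDiff_def, SimpleGraph.sup_adj,
    SimpleGraph.sdiff_adj, Subgraph.spanningCoe_adj, edge_adj, Set.mem_insert_iff,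
    Set.mem_singleton_iff, ha, hb]
  grind

theorem Subgraph.IsMatching.reachable_symmDiff [Finite V] {u v : V} (hM : M.IsMatching)
    (hM' : M'.IsMatching) (hMv : M.verts = {v}ᶜ) (hM'u : M'.verts = {u}ᶜ) (huv : u ≠ v) :
    (M.spanningCoe ∆ M'.spanningCoe).Reachable u v := by
  have hadj : (M.spanningCoe ∆ M'.spanningCoe ⊔ edge v u).Adj v u := by
    simp [edge_adj, huv.symm]
  have hcyc := hM.isCycles_symmDiff_sup_edge hM' hMv hM'u huv
  refine (hcyc.reachable_deleteEdges hadj).symm.mono ?_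
  intro a b hab
  rw [SimpleGraph.deleteEdges_adj, SimpleGraph.sup_adj] at hab
  obtain ⟨hab | hab, hne⟩ := hab
  · exact hab
  · exact absurd (Sym2.eq_iff.mpr ((edge_adj v u a b).mp hab).1) hne

end SimpleGraph

theorem stmt1_general {V : Type*} [Fintype V] (G : SimpleGraph V)
    (hFC : FactorCritical G)
    (M : G.Subgraph) (v : V) (hM : M.IsMatching ∧ M.verts = ({v}ᶜ : Set V))
    (u : V) (huv : G.Adj u v) :
    ∃ c : G.Walk v v, c.IsCycle ∧ Odd c.length ∧ s(u, v) ∈ c.edges ∧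
      -- the cycle is M-alternating except at the exposed vertex v:
      List.Chain' (fun e f => (e ∈ M.edgeSet) ≠ (f ∈ M.edgeSet)) c.edges ∧
      (∀ e, c.edges.head? = some e → e ∉ M.edgeSet) := by
  obtain ⟨hM, hMv⟩ := hM
  obtain ⟨M', hM', hM'u⟩ := hFC u
  have hle : M.spanningCoe ∆ M'.spanningCoe ≤ G :=
    symmDiff_le_sup.trans (sup_le M.spanningCoe_le M'.spanningCoe_le)
  obtain ⟨Q, hQ⟩ := (hM.reachable_symmDiff hM' hMv hM'u huv.ne).exists_isPath
  obtain ⟨x, hux, q, rfl⟩ := Walk.exists_eq_cons_of_ne huv.ne Q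
  have hvM := Subgraph.not_adj_of_verts_eq_compl_singleton hMv
  have huM' := Subgraph.not_adj_of_verts_eq_compl_singleton hM'u
  have huxM : M.Adj u x := by simpa [symmDiff_def, huM'] using hux
  have hvu : s(v, u) ∉ (M.spanningCoe ∆ M'.spanningCoe).edgeSet := by
    simpa [symmDiff_def, hvM] using fun h => huM' v h.symm
  let c : G.Walk v v := .cons huv.symm ((Walk.cons hux q).mapLe hle)
  have hchain : c.edges.IsChain (fun e f => (e ∈ M.edgeSet) ≠ (f ∈ M.edgeSet)) := by
    have hQchain := (hM.isAlternating_symmDiff_left hM').isChain_edges _ hQ.isTrail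
    simp only [Subgraph.edgeSet_spanningCoe] at hQchain
    simp only [c, Walk.edges_cons, Walk.edges_mapLe_eq_edges, List.isChain_cons_cons] at hQchain ⊢
    exact ⟨by simpa [Sym2.eq_swap, hvM] using huxM, hQchain⟩
  refine ⟨c, ?_, ?_, by simp [c, Sym2.eq_swap], hchain, by simp [c, hvM]⟩
  · rw [Walk.cons_isCycle_iff, Walk.edges_mapLe_eq_edges]
    exact ⟨hQ.mapLe hle, fun h => hvu (Walk.edges_subset_edgeSet _ h)⟩
  · rw [← Walk.length_edges, hchain.odd_length_iff (by simp [c])]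
    simp [hvM, M.adj_comm]

theorem stmt1 {V : Type*} [Fintype V] (G : SimpleGraph V)
    (h2 : TwoConnected G) (hFC : FactorCritical G)
    (M : G.Subgraph) (v : V) (hM : M.IsMatching ∧ M.verts = ({v}ᶜ : Set V))
    (u : V) (huv : G.Adj u v) :
    ∃ c : G.Walk v v, c.IsCycle ∧ Odd c.length ∧ s(u, v) ∈ c.edges ∧
      -- the cycle is M-alternating except at the exposed vertex v:
      List.Chain' (fun e f => (e ∈ M.edgeSet) ≠ (f ∈ M.edgeSet)) c.edges ∧
      (∀ e, c.edges.head? = some e → e ∉ M.edgeSet) :=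
  stmt1_general G hFC M v hM u huv
end

section
/- In a factor-critical graph G with two nearly perfect matchings M and M' exposing distinct vertices v and u respectively, the symmetric difference M △ M' contains a path from v to u of even length whose edges alternate between M' and M. -/
/-!
The path is grown backwards from `u`, two edges at a time: from its current end `x ≠ v` follow
the `M`-edge at `x` to `y`, then the `M'`-edge at `y` to `z`. These vertices are new because the
vertex set of the path is closed under `M'`-partners, and its vertices other than `x` are closed
under `M`-partners. Since paths are shorter than `card V`, the process must stop, and it can only
stop at `v`.
-/

open SimpleGraph

namespace SimpleGraph

variable {V : Type*} {G : SimpleGraph V}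

theorem Walk.exists_of_forall_exists_longer [Fintype V] {u v : V}
    (P : ∀ x, G.Walk x u → Prop) (hpath : ∀ x q, P x q → q.IsPath)
    (hstep : ∀ x q, P x q → x ≠ v → ∃ x' q', P x' q' ∧ q.length < q'.length)
    {x : V} (q : G.Walk x u) (hq : P x q) : ∃ p : G.Walk v u, P v p := by
  induction h : Fintype.card V - q.length using Nat.strong_induction_on generalizing x with
  | _ n ih =>
  by_cases hx : x = v
  · subst hx
    exact ⟨q, hq⟩
  obtain ⟨x', q', hq', hlt⟩ := hstep x q hq hx
  have := (hpath _ _ hq').length_lt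
  exact ih _ (by omega) q' hq' rfl

namespace Subgraph

def PartnerClosed (H : G.Subgraph) (l : List V) : Prop :=
  ∀ w ∈ l, ∀ w', H.Adj w w' → w' ∈ l

theorem partnerClosed_singleton {H : G.Subgraph} {a : V} (ha : a ∉ H.verts) :
    H.PartnerClosed [a] := by
  rintro w hw w' hww'
  rw [List.mem_singleton] at hw
  exact absurd (hw ▸ H.edge_vert hww') ha

theorem IsMatching.partnerClosed_cons_cons {H : G.Subgraph} (hH : H.IsMatching) {a b : V}
    {l : List V} (hab : H.Adj a b) (hl : H.PartnerClosed l) : H.PartnerClosed (a :: b :: l) := by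
  rintro w (_ | ⟨_, _ | ⟨_, hw⟩⟩) w' hww'
  · simp [hH.eq_of_adj_left hww' hab]
  · simp [hH.eq_of_adj_left hww' hab.symm]
  · exact List.mem_cons_of_mem _ (List.mem_cons_of_mem _ (hl w hw w' hww'))

end Subgraph

namespace Walk

variable {M M' : G.Subgraph}

structure IsEvenAlternatingPath (M M' : G.Subgraph) {a b : V} (p : G.Walk a b) : Prop where
  isPath : p.IsPath
  even_length : Even p.length
  edges_mem_symmDiff : ∀ e ∈ p.edges, e ∈ symmDiff M.edgeSet M'.edgeSet
  isChain : p.edges.IsChain (fun e f =>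
    (e ∈ M'.edgeSet ∧ f ∈ M.edgeSet) ∨ (e ∈ M.edgeSet ∧ f ∈ M'.edgeSet))
  head_mem : ∀ e, p.edges.head? = some e → e ∈ M'.edgeSet

theorem isEvenAlternatingPath_nil (u : V) : (nil : G.Walk u u).IsEvenAlternatingPath M M' :=
  ⟨.nil, .zero, by simp, by simp, by simp⟩

theorem IsEvenAlternatingPath.cons_cons {x y z u : V} {q : G.Walk x u}
    (hq : q.IsEvenAlternatingPath M M') (hzy : M'.Adj z y) (hyx : M.Adj y x)
    (hzy' : ¬ M.Adj z y) (hyx' : ¬ M'.Adj y x) (hy : y ∉ q.support) (hz : z ∉ y :: q.support) :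
    (cons (M'.adj_sub hzy) (cons (M.adj_sub hyx) q)).IsEvenAlternatingPath M M' := by
  refine ⟨?_, ?_, ?_, ?_, ?_⟩
  · exact (cons_isPath_iff _ _).2 ⟨(cons_isPath_iff _ _).2 ⟨hq.isPath, hy⟩, hz⟩
  · simpa [Nat.even_add_one] using hq.even_length
  · simp only [edges_cons, List.mem_cons, Set.mem_symmDiff]
    rintro e (rfl | rfl | he)
    · exact .inr ⟨hzy, hzy'⟩
    · exact .inl ⟨hyx, hyx'⟩
    · exact hq.edges_mem_symmDiff e he
  · simp only [edges_cons, List.isChain_cons_cons, Subgraph.mem_edgeSet]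
    exact ⟨.inl ⟨hzy, hyx⟩,
      List.isChain_cons.2 ⟨fun f hf => .inr ⟨hyx, hq.head_mem f hf⟩, hq.isChain⟩⟩
  · simpa using hzy

theorem IsEvenAlternatingPath.exists_cons_cons {x u : V} {q : G.Walk x u}
    (hM : M.IsMatching) (hM' : M'.IsMatching) (hx : x ∈ M.verts) (hu : ∀ w ≠ u, w ∈ M'.verts)
    (hq : q.IsEvenAlternatingPath M M') (hcl' : M'.PartnerClosed q.support)
    (hcl : M.PartnerClosed q.support.tail) :
    ∃ z y, ∃ (hzy : M'.Adj z y) (hyx : M.Adj y x),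
      (cons (M'.adj_sub hzy) (cons (M.adj_sub hyx) q)).IsEvenAlternatingPath M M' ∧
      M'.PartnerClosed (z :: y :: q.support) ∧ M.PartnerClosed (y :: q.support) := by
  have hsupp := q.cons_tail_support.symm
  obtain ⟨y, hxy, -⟩ := hM hx
  have hy : y ∉ q.support := by
    rw [hsupp]
    rintro (_ | ⟨_, hyT⟩)
    · exact (M.adj_sub hxy).ne rfl
    · have hnodup := hq.isPath.support_nodup
      rw [hsupp, List.nodup_cons] at hnodup
      exact hnodup.1 (hcl y hyT x hxy.symm)
  obtain ⟨z, hyz, -⟩ := hM' (hu y fun h => hy (h ▸ q.end_mem_support))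
  have hz : z ∉ y :: q.support := by
    rintro (_ | ⟨_, hzS⟩)
    · exact (M'.adj_sub hyz).ne rfl
    · exact hy (hcl' z hzS y hyz.symm)
  have hzy' : ¬ M.Adj z y := fun h =>
    hz (List.mem_cons_of_mem _ (hM.eq_of_adj_right h hxy ▸ q.start_mem_support))
  have hyx' : ¬ M'.Adj y x := fun h =>
    hz (List.mem_cons_of_mem _ (hM'.eq_of_adj_left h hyz ▸ q.start_mem_support))
  refine ⟨z, y, hyz.symm, hxy.symm, hq.cons_cons hyz.symm hxy.symm hzy' hyx' hy hz,
    hM'.partnerClosed_cons_cons hyz.symm hcl', ?_⟩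
  rw [hsupp]
  exact hM.partnerClosed_cons_cons hxy.symm hcl

end Walk

end SimpleGraph

open Walk in
theorem stmt2_general {V : Type*} [Fintype V] (G : SimpleGraph V)
    (M M' : G.Subgraph) (v u : V)
    (hM : M.IsMatching ∧ M.verts = ({v}ᶜ : Set V))
    (hM' : M'.IsMatching ∧ M'.verts = ({u}ᶜ : Set V)) :
    ∃ p : G.Walk v u, p.IsPath ∧ Even p.length ∧
      -- every edge of the path lies in the symmetric difference M △ M'
      (∀ e ∈ p.edges, e ∈ symmDiff M.edgeSet M'.edgeSet) ∧
      -- consecutive edges alternate between M' and M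
      List.Chain' (fun e f =>
        (e ∈ M'.edgeSet ∧ f ∈ M.edgeSet) ∨ (e ∈ M.edgeSet ∧ f ∈ M'.edgeSet)) p.edges ∧
      -- the path starts (at the M-exposed vertex v) with an edge of M'
      (∀ e, p.edges.head? = some e → e ∈ M'.edgeSet) := by
  let P : ∀ x, G.Walk x u → Prop := fun _ q =>
    q.IsEvenAlternatingPath M M' ∧ M'.PartnerClosed q.support ∧ M.PartnerClosed q.support.tail
  have hstep : ∀ x q, P x q → x ≠ v → ∃ x' q', P x' q' ∧ q.length < q'.length := by
    rintro x q ⟨hq, hclM', hclM⟩ hxv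
    obtain ⟨z, y, _, _, hq', hcl'⟩ := hq.exists_cons_cons hM.1 hM'.1
      (by simpa [hM.2] using hxv) (fun w hw => by simpa [hM'.2] using hw) hclM' hclM
    exact ⟨z, _, ⟨hq', hcl'⟩, by simp⟩
  have hstart : P u nil :=
    ⟨isEvenAlternatingPath_nil u, Subgraph.partnerClosed_singleton (by simp [hM'.2]), by
      simp [Subgraph.PartnerClosed]⟩
  obtain ⟨p, hp, -⟩ := exists_of_forall_exists_longer P (fun _ _ h => h.1.isPath) hstep nil hstart
  exact ⟨p, hp.isPath, hp.even_length, hp.edges_mem_symmDiff, hp.isChain, hp.head_mem⟩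

theorem stmt2 {V : Type*} [Fintype V] (G : SimpleGraph V)
    (hFC : FactorCritical G)
    (M M' : G.Subgraph) (v u : V) (hvu : v ≠ u)
    (hM : M.IsMatching ∧ M.verts = ({v}ᶜ : Set V))
    (hM' : M'.IsMatching ∧ M'.verts = ({u}ᶜ : Set V)) :
    ∃ p : G.Walk v u, p.IsPath ∧ Even p.length ∧
      -- every edge of the path lies in the symmetric difference M △ M'
      (∀ e ∈ p.edges, e ∈ symmDiff M.edgeSet M'.edgeSet) ∧
      -- consecutive edges alternate between M' and M
      List.Chain' (fun e f =>
        (e ∈ M'.edgeSet ∧ f ∈ M.edgeSet) ∨ (e ∈ M.edgeSet ∧ f ∈ M'.edgeSet)) p.edges ∧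
      -- the path starts (at the M-exposed vertex v) with an edge of M'
      (∀ e, p.edges.head? = some e → e ∈ M'.edgeSet) :=
  stmt2_general G M M' v u hM hM'
end

section
/- Let C be an odd cycle of length 2k+1 with a placement p aligned with C (C is an M_p-alternating cycle containing the exposed vertex). For any two vertices j, j' of C exposed by placements p_j and p_{j'} respectively, obtained by sliding pieces along C, p_j can be reconfigured to p_{j'} using at most k slide operations. -/
open SimpleGraph

/-- A placement of `n` labeled pieces on edges of `G`, pairwise vertex-disjoint. -/
structure Placement {V : Type*} (G : SimpleGraph V) (n : ℕ) where
  f : Fin n → Sym2 V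
  mem_edgeSet : ∀ i, f i ∈ G.edgeSet
  disj : ∀ i j, i ≠ j → ∀ x, x ∈ f i → x ∉ f j

def Placement.exposes {V : Type*} {G : SimpleGraph V} {n : ℕ}
    (p : Placement G n) (v : V) : Prop :=
  ∀ i, v ∉ p.f i

/-- Slide operation. -/
def Slide {V : Type*} {G : SimpleGraph V} {n : ℕ} (p q : Placement G n) : Prop :=
  ∃ (j : Fin n) (u w v : V), p.exposes v ∧ p.f j = s(u, w) ∧ G.Adj w v ∧
    q.f j = s(w, v) ∧ ∀ i, i ≠ j → q.f i = p.f i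

/-- `ReachableIn r m a b`: `b` is reachable from `a` in exactly `m` steps of `r`. -/
def ReachableIn {α : Type*} (r : α → α → Prop) : ℕ → α → α → Prop
  | 0 => fun a b => a = b
  | (m + 1) => fun a b => ∃ c, r a c ∧ ReachableIn r m c b

/-- The cycle of length `2k+1` on vertices `ZMod (2k+1)` (labels taken mod `2k+1`). -/
def CycZ (k : ℕ) : SimpleGraph (ZMod (2 * k + 1)) :=
  SimpleGraph.fromRel (fun a b => b = a + 1)

/-- The placement `p_j` on the odd cycle: piece `i ∈ [k]` occupies the edge
`(2i-1, 2i)` if `2i < j`, and `(2i, 2i+1)` if `j < 2i`; vertex `j` is exposed.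
(Here `i` ranges over `Fin k`, representing the piece `i+1 ∈ [k]`.) -/
def pj (k j : ℕ) : Fin k → Sym2 (ZMod (2 * k + 1)) :=
  fun i =>
    if 2 * ((i : ℕ) + 1) < j then
      s(((2 * (i : ℕ) + 1 : ℕ) : ZMod (2 * k + 1)),
        ((2 * (i : ℕ) + 2 : ℕ) : ZMod (2 * k + 1)))
    else
      s(((2 * (i : ℕ) + 2 : ℕ) : ZMod (2 * k + 1)),
        ((2 * (i : ℕ) + 3 : ℕ) : ZMod (2 * k + 1)))

/-
Sliding the piece of `p_{2m+1}` on the edge `{2m+2, 2m+3}` onto the exposed vertex `2m+1` gives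
`p_{2m+3}`, every other piece staying put. So `p_{2a+1}` reaches `p_{2b+1}` in `b - a ≤ k` slides
when `a ≤ b`; the case `b < a` follows by reversing, since the vertex a slide vacates is exposed
afterwards, so every slide can be undone.
-/

lemma ZMod.natCast_injOn_Icc_one (n : ℕ) : (Set.Icc 1 n).InjOn ((↑) : ℕ → ZMod n) := by
  intro a ha b hb hab
  have hpred : ((a - 1 : ℕ) : ZMod n) = ((b - 1 : ℕ) : ZMod n) := by
    rw [Nat.cast_sub ha.1, Nat.cast_sub hb.1, hab]
  have := CharP.natCast_injOn_Iio (ZMod n) n (Set.mem_Iio.2 (by grind)) (Set.mem_Iio.2 (by grind))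
    hpred
  grind

namespace ReachableIn

variable {α : Type*} {r : α → α → Prop}

lemma single {a b : α} (h : r a b) : ReachableIn r 1 a b := ⟨b, h, rfl⟩

lemma trans {m n : ℕ} {a b c : α} (hab : ReachableIn r m a b) (hbc : ReachableIn r n b c) :
    ReachableIn r (m + n) a c := by
  induction m generalizing a with
  | zero => cases hab; simpa using hbc
  | succ m ih =>
    obtain ⟨a', haa', ha'b⟩ := hab
    rw [Nat.add_right_comm]
    exact ⟨a', haa', ih ha'b⟩

lemma symm [Std.Symm r] {m : ℕ} {a b : α} (h : ReachableIn r m a b) :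
    ReachableIn r m b a := by
  induction m generalizing a with
  | zero => exact Eq.symm h
  | succ m ih =>
    obtain ⟨c, hac, hcb⟩ := h
    exact (ih hcb).trans (single (symm_of r hac))

end ReachableIn

lemma Placement.ext {V : Type*} {G : SimpleGraph V} {n : ℕ} {p q : Placement G n}
    (h : p.f = q.f) : p = q := by
  cases p; cases q; cases h; rfl

instance Slide.instSymm {V : Type*} {G : SimpleGraph V} {n : ℕ} :
    Std.Symm (@Slide V G n) where
  symm := by
    rintro p q ⟨j, u, w, v, hv, hpj, -, hqj, hq⟩
    have huw : G.Adj u w := by simpa [hpj] using p.mem_edgeSet j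
    refine ⟨j, v, w, u, ?_, by rw [hqj, Sym2.eq_swap], huw.symm, by rw [hpj, Sym2.eq_swap],
      fun i hi => (hq i hi).symm⟩
    intro i hu
    obtain rfl | hij := eq_or_ne i j
    · rw [hqj, Sym2.mem_iff] at hu
      rcases hu with rfl | rfl
      · exact huw.ne rfl
      · exact hv i (by simp [hpj])
    · rw [hq i hij] at hu
      exact p.disj j i hij.symm u (by simp [hpj]) hu

lemma CycZ.adj_add_one {k : ℕ} (hk : 1 ≤ k) (x : ZMod (2 * k + 1)) :
    (CycZ k).Adj x (x + 1) := by
  have : Fact (1 < 2 * k + 1) := ⟨by omega⟩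
  simp [CycZ, SimpleGraph.fromRel_adj]

def pjStart (j i : ℕ) : ℕ := if 2 * (i + 1) < j then 2 * i + 1 else 2 * i + 2

lemma pj_eq (k j : ℕ) (i : Fin k) :
    pj k j i = s(↑(pjStart j i), ↑(pjStart j i + 1)) := by
  unfold pj pjStart
  split_ifs <;> rfl

lemma pjStart_mem_Icc {k j : ℕ} (i : Fin k) (δ : ℕ) (hδ : δ ≤ 1) :
    pjStart j i + δ ∈ Set.Icc 1 (2 * k + 1) := by
  have := i.2
  unfold pjStart
  split_ifs <;> constructor <;> omega

lemma mem_pj_iff {k j : ℕ} {i : Fin k} {x : ZMod (2 * k + 1)} :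
    x ∈ pj k j i ↔ ∃ δ ≤ 1, x = ((pjStart j i + δ : ℕ) : ZMod (2 * k + 1)) := by
  rw [pj_eq, Sym2.mem_iff]
  constructor
  · rintro (rfl | rfl)
    exacts [⟨0, zero_le_one, rfl⟩, ⟨1, le_rfl, rfl⟩]
  · rintro ⟨δ, hδ, rfl⟩
    interval_cases δ <;> simp

lemma natCast_mem_pj {k j a : ℕ} {i : Fin k} (ha : a ∈ Set.Icc 1 (2 * k + 1))
    (h : (a : ZMod (2 * k + 1)) ∈ pj k j i) : ∃ δ ≤ 1, a = pjStart j i + δ := by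
  obtain ⟨δ, hδ, h⟩ := mem_pj_iff.1 h
  exact ⟨δ, hδ, ZMod.natCast_injOn_Icc_one _ ha (pjStart_mem_Icc i δ hδ) h⟩

@[simps]
def pjPlacement (k j : ℕ) : Placement (CycZ k) k where
  f := pj k j
  mem_edgeSet i := by
    rw [pj_eq, SimpleGraph.mem_edgeSet, Nat.cast_succ]
    exact CycZ.adj_add_one (by have := i.2; omega) _
  disj i i' hii' x hx hx' := by
    obtain ⟨δ, hδ, rfl⟩ := mem_pj_iff.1 hx
    obtain ⟨δ', hδ', h⟩ := natCast_mem_pj (pjStart_mem_Icc i δ hδ) hx'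
    have hne := Fin.val_injective.ne hii'
    unfold pjStart at h
    split_ifs at h <;> omega

lemma pjPlacement_exposes {k j : ℕ} (hj : Odd j) (hjk : j ≤ 2 * k + 1) :
    (pjPlacement k j).exposes (j : ZMod (2 * k + 1)) := by
  intro i h
  obtain ⟨δ, hδ, h⟩ := natCast_mem_pj ⟨hj.pos, hjk⟩ h
  obtain ⟨m, rfl⟩ := hj
  unfold pjStart at h
  split_ifs at h <;> omega

lemma slide_pjPlacement {k m : ℕ} (hm : m < k) :
    Slide (pjPlacement k (2 * m + 1)) (pjPlacement k (2 * m + 3)) := by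
  have hstart : pjStart (2 * m + 1) m = 2 * m + 2 := if_neg (by omega)
  have hstart' : pjStart (2 * m + 3) m = 2 * m + 1 := if_pos (by omega)
  refine ⟨⟨m, hm⟩, ((2 * m + 3 : ℕ) : ZMod (2 * k + 1)), ((2 * m + 2 : ℕ) : ZMod (2 * k + 1)),
    ((2 * m + 1 : ℕ) : ZMod (2 * k + 1)), pjPlacement_exposes (odd_two_mul_add_one m) (by omega),
    ?_, ?_, ?_, fun i hi => ?_⟩
  · rw [pjPlacement_f, pj_eq, hstart, Sym2.eq_swap]
  · rw [Nat.cast_succ (2 * m + 1)]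
    exact (CycZ.adj_add_one (by omega) _).symm
  · rw [pjPlacement_f, pj_eq, hstart', Sym2.eq_swap]
  · have hne : (i : ℕ) ≠ m := fun h => hi (Fin.ext h)
    have hstart_eq : pjStart (2 * m + 3) i = pjStart (2 * m + 1) i := by
      unfold pjStart
      split_ifs <;> omega
    rw [pjPlacement_f, pjPlacement_f, pj_eq, pj_eq, hstart_eq]

lemma reachableIn_pjPlacement {k m d : ℕ} (h : m + d ≤ k) :
    ReachableIn Slide d (pjPlacement k (2 * m + 1)) (pjPlacement k (2 * (m + d) + 1)) := by
  induction d generalizing m with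
  | zero => rfl
  | succ d ih =>
    have hrest := ih (m := m + 1) (by omega)
    rw [show 2 * (m + 1) + 1 = 2 * m + 3 by ring, Nat.add_right_comm] at hrest
    exact ⟨_, slide_pjPlacement (by omega), hrest⟩

theorem stmt4_general (k : ℕ) (j j' : ℕ)
    (hj : Odd j) (hj' : Odd j')
    (hjle : 1 ≤ j ∧ j ≤ 2 * k + 1) (hj'le : 1 ≤ j' ∧ j' ≤ 2 * k + 1)
    (p q : Placement (CycZ k) k) (hp : p.f = pj k j) (hq : q.f = pj k j') :
    ∃ m ≤ k, ReachableIn Slide m p q := by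
  obtain ⟨a, rfl⟩ := hj
  obtain ⟨b, rfl⟩ := hj'
  rw [Placement.ext (q := pjPlacement k _) hp, Placement.ext (q := pjPlacement k _) hq]
  rcases le_total a b with hab | hba
  · obtain ⟨d, rfl⟩ := Nat.exists_eq_add_of_le hab
    exact ⟨d, by omega, reachableIn_pjPlacement (by omega)⟩
  · obtain ⟨d, rfl⟩ := Nat.exists_eq_add_of_le hba
    exact ⟨d, by omega, (reachableIn_pjPlacement (by omega)).symm⟩

theorem stmt4 (k : ℕ) (hk : 1 ≤ k) (j j' : ℕ)
    (hj : Odd j) (hj' : Odd j')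
    (hjle : 1 ≤ j ∧ j ≤ 2 * k + 1) (hj'le : 1 ≤ j' ∧ j' ≤ 2 * k + 1)
    (p q : Placement (CycZ k) k) (hp : p.f = pj k j) (hq : q.f = pj k j') :
    ∃ m ≤ k, ReachableIn Slide m p q :=
  stmt4_general k j j' hj hj' hjle hj'le p q hp hq
end

section
/- Let G be a 2-connected factor-critical graph and H a central subgraph of G (i.e., G − V(H) has a perfect matching) that admits an odd proper ear decomposition G'_1,...,G'_{k'} = H. Then G has an odd proper ear decomposition G_1,...,G_k with G_i = G'_i for all i ≤ k'. -/
open SimpleGraph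

/-- `p` is a (proper) ear of the subgraph `H` of `G`. -/
def IsEar {V : Type*} (G : SimpleGraph V) (H : G.Subgraph)
    {a b : V} (p : G.Walk a b) : Prop :=
  p.IsPath ∧ a ∈ H.verts ∧ b ∈ H.verts ∧ a ≠ b ∧
    ∀ x ∈ p.support, x ≠ a → x ≠ b → x ∉ H.verts

/-- Odd proper ear decomposition sequences. -/
def IsOddProperEarDecompSeq {V : Type*} (G : SimpleGraph V)
    (Gs : List G.Subgraph) : Prop :=
  (∃ (v : V) (c : G.Walk v v), c.IsCycle ∧ Odd c.length ∧
      Gs.head? = some c.toSubgraph) ∧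
  List.Chain' (fun H H' => ∃ (a b : V) (p : G.Walk a b),
      IsEar G H p ∧ Odd p.length ∧ H' = H ⊔ p.toSubgraph) Gs

/-!
If `M` is a perfect matching of `G - V(H)` and `P` is an odd proper ear of `H` whose vertex set
is closed under taking `M`-partners, then `H ∪ P` is again central. So it is enough to find such
an ear as long as `H` does not span `G`; afterwards the missing edges are ears of length one.

Take an edge `ub` with `u ∈ H`, `b ∉ H`, and a matching `N` of `G - b`. Following edges of `M` and
`N` alternately from `b` gives an even path whose vertices, except its end, lie outside `H` and are
paired by `M`; it ends in `H`. If the end is not `u`, adding `ub` in front gives the ear. If it is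
`u`, the path closes an odd cycle through `u`: a blossom, every vertex of which is the end of an
even path from `u` inside the blossom with `M`-paired vertices. Since `G - u` is connected, some
blossom vertex `a` has a neighbour `b` outside the blossom and `u`, and the same argument from the
edge `ab` either yields an ear or a strictly larger blossom.
-/

namespace SimpleGraph

variable {V : Type*} {G : SimpleGraph V}

def Subgraph.AdjClosed (M : G.Subgraph) (s : Set V) : Prop :=
  ∀ ⦃v w⦄, M.Adj v w → v ∈ s → w ∈ s

def Subgraph.IsCentral (H : G.Subgraph) : Prop :=
  ∃ M : G.Subgraph, M.IsMatching ∧ M.verts = H.vertsᶜ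

lemma Subgraph.AdjClosed.insert_insert {M : G.Subgraph} (hM : M.IsMatching) {s : Set V}
    (hs : M.AdjClosed s) {a b : V} (hab : M.Adj a b) : M.AdjClosed (insert a (insert b s)) := by
  rintro v w hvw (rfl | rfl | hv)
  · exact .inr (.inl (hM.eq_of_adj_left hvw hab))
  · exact .inl (hM.eq_of_adj_left hvw hab.symm)
  · exact .inr (.inr (hs hvw hv))

lemma Subgraph.IsMatching.induce_verts_diff {M : G.Subgraph} (hM : M.IsMatching) {s : Set V}
    (hs : M.AdjClosed s) : (M.induce (M.verts \ s)).IsMatching := by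
  intro v hv
  obtain ⟨w, hvw, huniq⟩ := hM hv.1
  exact ⟨w, ⟨hv, ⟨hvw.snd_mem, fun hw => hv.2 (hs hvw.symm hw)⟩, hvw⟩,
    fun w' hw' => huniq w' hw'.2.2⟩

lemma Subgraph.isCentral_sup_toSubgraph {H M : G.Subgraph} (hM : M.IsMatching)
    (hMv : M.verts = H.vertsᶜ) {a b : V} {q : G.Walk a b}
    (hq : M.AdjClosed {x | x ∈ q.support}) : (H ⊔ q.toSubgraph).IsCentral :=
  ⟨_, hM.induce_verts_diff hq, by
    rw [Subgraph.induce_verts, hMv, Subgraph.verts_sup, Walk.verts_toSubgraph, Set.compl_union,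
      Set.sdiff_eq]⟩

lemma Walk.IsPath.append {u v w : V} {p : G.Walk u v} {q : G.Walk v w} (hp : p.IsPath)
    (hq : q.IsPath) (hpq : ∀ x ∈ p.support, x ∈ q.support → x = v) : (p.append q).IsPath := by
  rw [Walk.isPath_def, Walk.support_append, List.nodup_append]
  refine ⟨hp.support_nodup, hq.support_nodup.sublist (List.tail_sublist _), ?_⟩
  rintro x hx _ hy rfl
  have hq' := hq.support_nodup
  rw [← Walk.cons_tail_support, List.nodup_cons] at hq'
  exact hq'.1 (hpq x hx (List.mem_of_mem_tail hy) ▸ hy)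

lemma exists_adj_mem_not_mem_of_reachable {s : Set V} {x y : V} (hxy : G.Reachable x y)
    (hx : x ∈ s) (hy : y ∉ s) : ∃ a ∈ s, ∃ b ∉ s, G.Adj a b := by
  obtain ⟨p⟩ := hxy
  obtain ⟨d, -, hd₁, hd₂⟩ := p.exists_boundary_dart s hx hy
  exact ⟨d.fst, hd₁, d.snd, hd₂, d.adj⟩

lemma exists_adj_mem_not_mem_of_connected_induce_compl {u : V}
    (hu : (G.induce {u}ᶜ).Connected) {s : Set V} (hus : u ∉ s) {x y : V} (hx : x ∈ s)
    (hy : y ∉ s) (hyu : y ≠ u) : ∃ a ∈ s, ∃ b ∉ s, b ≠ u ∧ G.Adj a b := by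
  have hxu : x ≠ u := by rintro rfl; exact hus hx
  obtain ⟨a, ha, b, hb, hab⟩ := exists_adj_mem_not_mem_of_reachable
    (s := {z : ({u}ᶜ : Set V) | (z : V) ∈ s}) (hu.preconnected ⟨x, hxu⟩ ⟨y, hyu⟩) hx hy
  exact ⟨a, ha, b, hb, b.2, hab⟩

inductive Walk.IsEvenAlternating (M : G.Subgraph) : {u v : V} → G.Walk u v → Prop
  | nil {u : V} : Walk.IsEvenAlternating M (Walk.nil : G.Walk u u)
  | cons_cons {u v w x : V} {h : G.Adj u v} {h' : G.Adj v w} {p : G.Walk w x} :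
      M.Adj u v → Walk.IsEvenAlternating M p →
        Walk.IsEvenAlternating M (Walk.cons h (Walk.cons h' p))

namespace Walk.IsEvenAlternating

variable {M : G.Subgraph} {u v : V} {p : G.Walk u v}

lemma even_length (hp : p.IsEvenAlternating M) : Even p.length := by
  induction hp with
  | nil => exact ⟨0, rfl⟩
  | cons_cons _ _ ih => simpa [Walk.length_cons, Nat.even_add_one] using ih

lemma mem_support_of_adj (hM : M.IsMatching) (hp : p.IsEvenAlternating M) {x y : V}
    (hx : x ∈ p.support) (hxv : x ≠ v) (hxy : M.Adj x y) : y ∈ p.support := by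
  induction hp with
  | nil => exact absurd (by simpa using hx) hxv
  | cons_cons hM₁ _ ih =>
    simp only [Walk.support_cons, List.mem_cons] at hx ⊢
    rcases hx with rfl | rfl | hx
    · exact .inr (.inl (hM.eq_of_adj_left hxy hM₁))
    · exact .inl (hM.eq_of_adj_left hxy hM₁.symm)
    · exact .inr (.inr (ih hx hxv))

end Walk.IsEvenAlternating

/-- `F` holds the vertices visited so far and `z` is the current one; as `insert z F` is
`N`-closed, the walk never returns to a visited vertex. -/
theorem exists_isEvenAlternating_path_of_adjClosed [Finite V] {M N : G.Subgraph}
    (hM : M.IsMatching) (hN : N.IsMatching) {T : Set V} (hT : M.AdjClosed T)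
    (hTM : Tᶜ ⊆ M.verts) (F : Set V) (z : V) (hzF : z ∉ F) (hF : M.AdjClosed F)
    (hNF : N.AdjClosed (insert z F)) (hNv : ∀ x ∉ T, x ∉ insert z F → x ∈ N.verts) :
    ∃ t ∈ T, ∃ p : G.Walk z t, p.IsPath ∧ p.IsEvenAlternating M ∧
      ∀ x ∈ p.support, x ∈ T ∪ F → x = t := by
  by_cases hzT : z ∈ T
  · exact ⟨z, hzT, .nil, .nil, .nil, by simp⟩
  obtain ⟨y, hzy, -⟩ := hM (hTM hzT)
  have hyT : y ∉ T := fun hy => hzT (hT hzy.symm hy)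
  have hy : y ∉ insert z F := by
    rintro (h | h)
    exacts [(M.adj_sub hzy).ne h.symm, hzF (hF hzy.symm h)]
  obtain ⟨z', hyz', -⟩ := hN (hNv y hyT hy)
  have hz' : z' ∉ insert y (insert z F) := by
    rintro (h | h)
    exacts [(N.adj_sub hyz').ne h.symm, hy (hNF hyz'.symm h)]
  obtain ⟨t, ht, p, hp, halt, hpT⟩ := exists_isEvenAlternating_path_of_adjClosed hM hN hT hTM
    (insert y (insert z F)) z' hz' (hF.insert_insert hM hzy.symm)
    (hNF.insert_insert hN hyz'.symm) (fun x hxT hx => hNv x hxT fun h => hx (.inr (.inr h)))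
  have hzp : z ∉ p.support := fun h => hzT (hpT z h (by simp) ▸ ht)
  have hyp : y ∉ p.support := fun h => hyT (hpT y h (by simp) ▸ ht)
  refine ⟨t, ht, .cons (M.adj_sub hzy) (.cons (N.adj_sub hyz') p), ?_, .cons_cons hzy halt, ?_⟩
  · simp [Walk.cons_isPath_iff, hp, hyp, hzp, (M.adj_sub hzy).ne]
  · simp only [Walk.support_cons, List.mem_cons]
    rintro x (rfl | rfl | hx) hxTF
    · exact absurd hxTF (by simp [hzT, hzF])
    · exact absurd hxTF (by simp_all)
    · exact hpT x hx (by simp only [Set.mem_union, Set.mem_insert_iff] at hxTF ⊢; tauto)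
termination_by (T ∪ F)ᶜ.ncard
decreasing_by
  have hsub : (T ∪ insert y (insert z F))ᶜ ⊆ (T ∪ F)ᶜ :=
    Set.compl_subset_compl.2 (Set.union_subset_union_right T
      ((Set.subset_insert _ _).trans (Set.subset_insert _ _)))
  exact Set.ncard_lt_ncard ((Set.ssubset_iff_of_subset hsub).2 ⟨z, by simp [hzT, hzF], by simp⟩)
    (Set.toFinite _)

theorem exists_isEvenAlternating_path [Finite V] {M N : G.Subgraph}
    (hM : M.IsMatching) (hN : N.IsMatching) {T : Set V} (hT : M.AdjClosed T)
    (hTM : Tᶜ ⊆ M.verts) {b : V} (hNv : N.verts = {b}ᶜ) :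
    ∃ t ∈ T, ∃ p : G.Walk b t, p.IsPath ∧ p.IsEvenAlternating M ∧
      ∀ x ∈ p.support, x ∈ T → x = t := by
  obtain ⟨t, ht, p, hp, halt, hpT⟩ := exists_isEvenAlternating_path_of_adjClosed hM hN hT hTM ∅ b
    (Set.notMem_empty b) (fun _ _ _ h => h.elim)
    (fun v _ hv h => absurd (hv.fst_mem) (by simp_all))
    (fun x _ hx => by simp_all)
  exact ⟨t, ht, p, hp, halt, fun x hx hxT => hpT x hx (.inl hxT)⟩

structure Walk.IsStem (M : G.Subgraph) (X : Set V) {u v : V} (c : G.Walk u v) : Prop where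
  isPath : c.IsPath
  even_length : Even c.length
  support_subset : ∀ x ∈ c.support, x ∈ X
  adjClosed : M.AdjClosed {x | x ∈ c.support}

namespace Walk.IsStem

variable {M : G.Subgraph} {X : Set V} {u a : V} {c : G.Walk u a}

lemma mono {Y : Set V} (hc : c.IsStem M X) (hXY : X ⊆ Y) : c.IsStem M Y :=
  ⟨hc.isPath, hc.even_length, fun x hx => hXY (hc.support_subset x hx), hc.adjClosed⟩

lemma concat_concat (hM : M.IsMatching) (hc : c.IsStem M X) {b y : V} (hab : G.Adj a b)
    (hby : M.Adj b y) (hbc : b ∉ c.support) (hyc : y ∉ c.support) (hbX : b ∈ X) (hyX : y ∈ X) :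
    ((c.concat hab).concat (M.adj_sub hby)).IsStem M X := by
  refine ⟨(hc.isPath.concat hbc hab).concat (by simp [hyc, (M.adj_sub hby).ne.symm]) _, ?_, ?_, ?_⟩
  · simpa [Walk.length_concat, add_assoc] using hc.even_length.add even_two
  · simp only [Walk.support_concat, List.mem_append, List.mem_singleton]
    rintro x ((hx | rfl) | rfl)
    exacts [hc.support_subset x hx, hbX, hyX]
  · simp only [Subgraph.AdjClosed, Walk.support_concat, List.mem_append, List.mem_singleton,
      Set.mem_ofPred_eq]
    rintro v w hvw ((hv | rfl) | rfl)
    · exact .inl (.inl (hc.adjClosed hvw hv))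
    · exact .inr (hM.eq_of_adj_left hvw hby)
    · exact .inl (.inr (hM.eq_of_adj_left hvw hby.symm))

lemma append_reverse (hM : M.IsMatching) (hc : c.IsStem M X) {b : V} {p : G.Walk b a}
    (hp : p.IsEvenAlternating M) (hpath : p.IsPath) (hpX : ∀ x ∈ p.support, x ∈ X)
    (hcp : ∀ x ∈ c.support, x ∈ p.support → x = a) : (c.append p.reverse).IsStem M X := by
  refine ⟨hc.isPath.append hpath.reverse ?_, ?_, ?_, ?_⟩
  · simpa only [Walk.support_reverse, List.mem_reverse] using hcp
  · simpa only [Walk.length_append, Walk.length_reverse] using hc.even_length.add hp.even_length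
  · simp only [Walk.mem_support_append_iff, Walk.support_reverse, List.mem_reverse]
    rintro x (hx | hx)
    exacts [hc.support_subset x hx, hpX x hx]
  · simp only [Subgraph.AdjClosed, Walk.mem_support_append_iff, Walk.support_reverse,
      List.mem_reverse, Set.mem_ofPred_eq]
    rintro v w hvw (hv | hv)
    · exact .inl (hc.adjClosed hvw hv)
    · by_cases hva : v = a
      · exact .inl (hc.adjClosed hvw (hva ▸ c.end_mem_support))
      · exact .inr (hp.mem_support_of_adj hM hv hva hvw)

end Walk.IsStem

/-- Vertices at even distance from the start of `p` are reached backwards from the stem `d`,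
those at odd distance forwards from the stem `c` through the edge `ab`. -/
theorem Walk.IsEvenAlternating.exists_isStem {M : G.Subgraph} (hM : M.IsMatching) {X : Set V}
    {b t : V} {p : G.Walk b t} (hp : p.IsEvenAlternating M) (hpath : p.IsPath)
    (hpX : ∀ x ∈ p.support, x ∈ X) {u : V} {d : G.Walk u t} (hd : d.IsStem M X)
    (hdp : ∀ x ∈ d.support, x ∈ p.support → x = t) {a : V} (c : G.Walk u a)
    (hc : c.IsStem M X) (hcp : ∀ x ∈ c.support, x ∈ p.support → x = t) (hab : G.Adj a b) :
    ∀ x ∈ p.support, x ≠ t → ∃ e : G.Walk u x, e.IsStem M X := by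
  induction hp generalizing a with
  | nil => simp
  | @cons_cons b y z t hby hyz q hMby hq ih =>
    set p := Walk.cons hby (Walk.cons hyz q)
    have ⟨⟨hqpath, hyq⟩, hbq⟩ : (q.IsPath ∧ y ∉ q.support) ∧ b ∉ (Walk.cons hyz q).support := by
      simpa only [p, Walk.cons_isPath_iff] using hpath
    have hbt : b ≠ t := fun h => hbq (h ▸ (Walk.cons hyz q).end_mem_support)
    have hyt : y ≠ t := fun h => hyq (h ▸ q.end_mem_support)
    have hc' := hc.concat_concat hM hab hMby (fun h => hbt (hcp b h p.start_mem_support))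
      (fun h => hyt (hcp y h (by simp [p]))) (hpX b (by simp [p])) (hpX y (by simp [p]))
    simp only [p, Walk.support_cons, List.mem_cons]
    rintro x (rfl | rfl | hx) hxt
    · exact ⟨_, hd.append_reverse hM (.cons_cons hMby hq) hpath hpX hdp⟩
    · exact ⟨_, hc'⟩
    · refine ih hqpath (fun x hx => hpX x (by simp [p, hx])) hd
        (fun x hx hxq => hdp x hx (by simp [p, hxq])) _ hc' ?_ hyz x hx hxt
      simp only [Walk.support_concat, List.mem_append, List.mem_singleton]
      rintro x ((hx | rfl) | rfl) hxq
      · exact hcp x hx (by simp [p, hxq])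
      · exact absurd hxq (fun h => hbq (by simp [h]))
      · exact absurd hxq hyq

def IsBlossom (M : G.Subgraph) (u : V) (S : Set V) : Prop :=
  ∀ x ∈ S, ∃ c : G.Walk u x, c.IsStem M (insert u S)

namespace IsBlossom

variable {M : G.Subgraph} {u : V} {S : Set V}

lemma exists_isStem (hS : IsBlossom M u S) (huM : u ∉ M.verts) {x : V} (hx : x ∈ insert u S) :
    ∃ c : G.Walk u x, c.IsStem M (insert u S) := by
  rcases hx with rfl | hx
  · refine ⟨.nil, ⟨.nil, ⟨0, rfl⟩, by simp, ?_⟩⟩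
    rintro v w hvw hv
    simp only [Walk.support_nil, List.mem_singleton, Set.mem_ofPred_eq] at hv
    exact absurd (hv ▸ hvw.fst_mem) huM
  · exact hS x hx

lemma adjClosed (hS : IsBlossom M u S) (huM : u ∉ M.verts) : M.AdjClosed S := by
  intro v w hvw hv
  obtain ⟨c, hc⟩ := hS v hv
  rcases hc.support_subset w (hc.adjClosed hvw c.end_mem_support) with rfl | hw
  exacts [absurd hvw.snd_mem huM, hw]

lemma union_support (hM : M.IsMatching) (hS : IsBlossom M u S) (huM : u ∉ M.verts)
    {a b t : V} {c : G.Walk u a} (hc : c.IsStem M (insert u S)) (hab : G.Adj a b)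
    {p : G.Walk b t} (hp : p.IsEvenAlternating M) (hpath : p.IsPath)
    (hpS : ∀ x ∈ p.support, x ∈ insert u S → x = t) (ht : t ∈ insert u S) :
    IsBlossom M u (S ∪ {x | x ∈ p.support ∧ x ≠ t}) := by
  have hmono : insert u S ⊆ insert u (S ∪ {x | x ∈ p.support ∧ x ≠ t}) :=
    Set.insert_subset_insert Set.subset_union_left
  obtain ⟨d, hd⟩ := hS.exists_isStem huM ht
  rintro x (hx | ⟨hx, hxt⟩)
  · obtain ⟨e, he⟩ := hS x hx
    exact ⟨e, he.mono hmono⟩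
  · refine hp.exists_isStem hM hpath (fun y hy => ?_) (hd.mono hmono)
      (fun y hy hyp => hpS y hyp (hd.support_subset y hy)) c (hc.mono hmono)
      (fun y hy hyp => hpS y hyp (hc.support_subset y hy)) hab x hx hxt
    by_cases hyt : y = t
    · exact hyt ▸ hmono ht
    · exact .inr (.inr ⟨hy, hyt⟩)

end IsBlossom

theorem isEar_append_cons {H M : G.Subgraph} (hM : M.IsMatching) (hMv : M.verts = H.vertsᶜ)
    {S : Set V} (hSH : S ⊆ H.vertsᶜ) {u a b t : V} {c : G.Walk u a}
    (hc : c.IsStem M (insert u S)) (hab : G.Adj a b) {p : G.Walk b t}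
    (hp : p.IsEvenAlternating M) (hpath : p.IsPath)
    (hpT : ∀ x ∈ p.support, x ∈ H.verts ∪ S → x = t) (hu : u ∈ H.verts) (ht : t ∈ H.verts)
    (htu : t ≠ u) :
    IsEar G H (c.append (.cons hab p)) ∧ Odd (c.append (.cons hab p)).length ∧
      M.AdjClosed {x | x ∈ (c.append (.cons hab p)).support} := by
  have hcp : ∀ x ∈ c.support, x ∉ p.support := fun x hxc hxp => by
    rcases hc.support_subset x hxc with rfl | hxS
    · exact htu (hpT x hxp (.inl hu)).symm
    · exact hSH hxS (hpT x hxp (.inr hxS) ▸ ht)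
  have hint : ∀ x ∈ (c.append (.cons hab p)).support, x ≠ u → x ≠ t → x ∉ H.verts := by
    simp only [Walk.mem_support_append_iff, Walk.support_cons, List.mem_cons]
    rintro x (hx | rfl | hx) hxu hxt hxH
    · rcases hc.support_subset x hx with rfl | hxS
      exacts [hxu rfl, hSH hxS hxH]
    · rcases hc.support_subset x c.end_mem_support with rfl | hxS
      exacts [hxu rfl, hSH hxS hxH]
    · exact hxt (hpT x hx (.inl hxH))
  refine ⟨⟨hc.isPath.append (hpath.cons (hcp a c.end_mem_support)) ?_, hu, ht, htu.symm, hint⟩,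
    ?_, ?_⟩
  · simp only [Walk.support_cons, List.mem_cons]
    rintro x hx (rfl | hxp)
    exacts [rfl, absurd hxp (hcp x hx)]
  · simpa [Walk.length_append, Walk.length_cons, ← add_assoc, Nat.odd_add_one,
      Nat.not_odd_iff_even] using hc.even_length.add hp.even_length
  · simp only [Subgraph.AdjClosed, Walk.mem_support_append_iff, Walk.support_cons, List.mem_cons,
      Set.mem_ofPred_eq]
    rintro v w hvw (hv | rfl | hv)
    · exact .inl (hc.adjClosed hvw hv)
    · exact .inl (hc.adjClosed hvw c.end_mem_support)
    · by_cases hvt : v = t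
      · exact absurd (hvt ▸ ht) (by simpa [hMv] using hvw.fst_mem)
      · exact .inr (.inr (hp.mem_support_of_adj hM hv hvt hvw))

theorem exists_ear_of_isBlossom [Finite V] (hFC : FactorCritical G) {H M : G.Subgraph}
    (hM : M.IsMatching) (hMv : M.verts = H.vertsᶜ) {u u' : V} (hu : u ∈ H.verts)
    (hu' : u' ∈ H.verts) (hu'u : u' ≠ u) (hcut : (G.induce {u}ᶜ).Connected) (S : Set V)
    (hSH : S ⊆ H.vertsᶜ) (hS : IsBlossom M u S) {a b : V} (ha : a ∈ insert u S)
    (hb : b ∉ insert u S) (hab : G.Adj a b) (hnew : a ∈ S ∨ b ∉ H.verts) :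
    ∃ (x y : V) (q : G.Walk x y), IsEar G H q ∧ Odd q.length ∧
      M.AdjClosed {x | x ∈ q.support} ∧ ∃ x ∈ q.support, x ∉ H.verts := by
  have huM : u ∉ M.verts := by simpa [hMv] using hu
  obtain ⟨c, hc⟩ := hS.exists_isStem huM ha
  obtain ⟨N, hN, hNv⟩ := hFC b
  have hT : M.AdjClosed (H.verts ∪ S) := by
    rintro v w hvw (hv | hv)
    exacts [absurd hv (by simpa [hMv] using hvw.fst_mem), .inr (hS.adjClosed huM hvw hv)]
  obtain ⟨t, ht, p, hpath, hp, hpT⟩ := exists_isEvenAlternating_path hM hN hT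
    (fun x hx => by simp_all) hNv
  by_cases htH : t ∈ H.verts ∧ t ≠ u
  · obtain ⟨hear, hodd, hcl⟩ := isEar_append_cons hM hMv hSH hc hab hp hpath hpT hu htH.1 htH.2
    refine ⟨u, t, _, hear, hodd, hcl, ?_⟩
    rcases hnew with haS | hbH
    exacts [⟨a, by simp, hSH haS⟩, ⟨b, by simp, hbH⟩]
  have ht' : t ∈ insert u S := by
    rcases ht with ht | ht
    exacts [.inl (not_not.1 fun h => htH ⟨ht, h⟩), .inr ht]
  set S' := S ∪ {x | x ∈ p.support ∧ x ≠ t}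
  have hS'H : S' ⊆ H.vertsᶜ := by
    rintro x (hx | ⟨hx, hxt⟩)
    exacts [hSH hx, fun hxH => hxt (hpT x hx (.inl hxH))]
  have hS' : IsBlossom M u S' := hS.union_support hM huM hc hab hp hpath
    (fun x hx hxS => hpT x hx (by rcases hxS with rfl | hxS; exacts [.inl hu, .inr hxS])) ht'
  have hbS' : b ∈ S' := .inr ⟨p.start_mem_support, fun h => hb (h ▸ ht')⟩
  obtain ⟨a', ha', b', hb', hb'u, ha'b'⟩ := exists_adj_mem_not_mem_of_connected_induce_compl hcut
    (s := S') (fun h => hS'H h hu) hbS' (fun h => hS'H h hu') hu'u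
  exact exists_ear_of_isBlossom hFC hM hMv hu hu' hu'u hcut S' hS'H hS' (.inr ha')
    (by simp [hb'u, hb']) ha'b' (.inl ha')
termination_by Sᶜ.ncard
decreasing_by
  refine Set.ncard_lt_ncard ((Set.ssubset_iff_of_subset ?_).2 ⟨b, ?_, ?_⟩) (Set.toFinite _)
  · exact Set.compl_subset_compl.2 Set.subset_union_left
  · exact fun h => hb (.inr h)
  · exact not_not.2 hbS'

def EarStep (G : SimpleGraph V) (H H' : G.Subgraph) : Prop :=
  ∃ (a b : V) (p : G.Walk a b), IsEar G H p ∧ Odd p.length ∧ H' = H ⊔ p.toSubgraph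

lemma EarStep.le {H H' : G.Subgraph} (h : EarStep G H H') : H ≤ H' := by
  obtain ⟨_, _, _, _, _, rfl⟩ := h
  exact le_sup_left

theorem Subgraph.IsCentral.exists_earStep [Finite V] (hconn : G.Connected)
    (hcut : ∀ v, (G.induce {v}ᶜ).Connected) (hFC : FactorCritical G) {H : G.Subgraph}
    (hH : H.IsCentral) {x y : V} (hx : x ∈ H.verts) (hy : y ∈ H.verts) (hxy : x ≠ y)
    (hsp : H.verts ≠ Set.univ) :
    ∃ H', EarStep G H H' ∧ H'.IsCentral ∧ H ≤ H' ∧ H'.vertsᶜ.ncard < H.vertsᶜ.ncard := by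
  obtain ⟨M, hM, hMv⟩ := hH
  obtain ⟨v, hv⟩ := (Set.ne_univ_iff_exists_notMem _).1 hsp
  obtain ⟨u, hu, b, hb, hub⟩ := exists_adj_mem_not_mem_of_reachable (hconn.preconnected x v) hx hv
  obtain ⟨u', hu', hu'u⟩ : ∃ u' ∈ H.verts, u' ≠ u := by
    by_cases hxu : x = u
    exacts [⟨y, hy, hxu ▸ hxy.symm⟩, ⟨x, hx, hxu⟩]
  obtain ⟨_, _, q, hq, hodd, hcl, w, hwq, hwH⟩ := exists_ear_of_isBlossom hFC hM hMv hu hu' hu'u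
    (hcut u) ∅ (Set.empty_subset _) (fun _ h => h.elim) (Set.mem_insert u ∅)
    (by simpa using (ne_of_mem_of_not_mem hu hb).symm) hub (.inr hb)
  refine ⟨H ⊔ q.toSubgraph, ⟨_, _, q, hq, hodd, rfl⟩, Subgraph.isCentral_sup_toSubgraph hM hMv hcl,
    le_sup_left, Set.ncard_lt_ncard ?_ (Set.toFinite _)⟩
  rw [Subgraph.verts_sup, compl_lt_compl_iff_lt]
  exact (Set.ssubset_iff_of_subset Set.subset_union_left).2
    ⟨w, .inr ((Walk.mem_verts_toSubgraph q).2 hwq), hwH⟩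

theorem reflTransGen_earStep_top_of_verts_eq_univ [Finite V] {H : G.Subgraph}
    (hH : H.verts = Set.univ) : Relation.ReflTransGen (EarStep G) H ⊤ := by
  by_cases hedge : ∃ a b, G.Adj a b ∧ ¬ H.Adj a b
  · obtain ⟨a, b, hab, hHab⟩ := hedge
    have hstep : EarStep G H (H ⊔ (Walk.cons hab .nil).toSubgraph) :=
      ⟨a, b, _, ⟨by simp [hab.ne], by simp [hH], by simp [hH], hab.ne, by simp_all⟩, odd_one, rfl⟩
    exact .head hstep (reflTransGen_earStep_top_of_verts_eq_univ (by simp [hH]))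
  · simp only [not_exists, not_and, not_not] at hedge
    have htop : H = ⊤ := Subgraph.ext (by simp [hH]) (by
      ext a b
      exact ⟨fun h => H.adj_sub h, hedge a b⟩)
    exact htop ▸ .refl
termination_by (G.edgeSet \ H.edgeSet).ncard
decreasing_by
  refine Set.ncard_lt_ncard ((Set.ssubset_iff_of_subset ?_).2 ⟨s(a, b), ⟨hab, hHab⟩, ?_⟩)
    (Set.toFinite _)
  · exact Set.sdiff_subset_sdiff_right (Subgraph.edgeSet_mono le_sup_left)
  · simp

theorem Subgraph.IsCentral.reflTransGen_earStep_top [Finite V] (hconn : G.Connected)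
    (hcut : ∀ v, (G.induce {v}ᶜ).Connected) (hFC : FactorCritical G) {H : G.Subgraph}
    (hH : H.IsCentral) {x y : V} (hx : x ∈ H.verts) (hy : y ∈ H.verts) (hxy : x ≠ y) :
    Relation.ReflTransGen (EarStep G) H ⊤ := by
  by_cases hsp : H.verts = Set.univ
  · exact reflTransGen_earStep_top_of_verts_eq_univ hsp
  obtain ⟨H', hstep, hH', hle, hlt⟩ := hH.exists_earStep hconn hcut hFC hx hy hxy hsp
  exact .head hstep (hH'.reflTransGen_earStep_top hconn hcut hFC (hle.1 hx) (hle.1 hy) hxy)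
termination_by H.vertsᶜ.ncard

end SimpleGraph
theorem stmt7 {V : Type*} [Fintype V] (G : SimpleGraph V)
    (h2 : TwoConnected G) (hFC : FactorCritical G)
    (H : G.Subgraph)
    -- `H` is central: `G − V(H)` has a perfect matching
    (hcentral : ∃ M : G.Subgraph, M.IsMatching ∧ M.verts = H.vertsᶜ)
    (Gs' : List G.Subgraph) (hGs' : IsOddProperEarDecompSeq G Gs')
    (hlast : Gs'.getLast? = some H) :
    ∃ Gs : List G.Subgraph, IsOddProperEarDecompSeq G Gs ∧
      Gs.getLast? = some (⊤ : G.Subgraph) ∧ Gs' <+: Gs := by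
  obtain ⟨⟨v, c, hcyc, hcodd, hhead⟩, hchain⟩ := hGs'
  obtain ⟨rest, rfl⟩ := List.head?_eq_some_iff.1 hhead
  replace hchain : List.IsChain (EarStep G) (c.toSubgraph :: rest) := hchain
  have hcH : c.toSubgraph ≤ H :=
    Relation.reflTransGen_le_of_le (r := (· ≤ ·)) (fun _ _ => EarStep.le) _ _
      (List.relationReflTransGen_of_exists_isChain_cons rest hchain
        (by simpa [List.getLast?_eq_some_getLast] using hlast))
  obtain ⟨x, y, hx, hy, hxy⟩ : ∃ x y, x ∈ H.verts ∧ y ∈ H.verts ∧ x ≠ y := by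
    cases c with
    | nil => exact absurd rfl hcyc.ne_nil
    | cons hadj q => exact ⟨_, _, hcH.1 (by simp), hcH.1 (by simp), hadj.ne⟩
  obtain ⟨L, hL, hLtop⟩ := List.exists_isChain_cons_of_relationReflTransGen
    (Subgraph.IsCentral.reflTransGen_earStep_top h2.2.1 h2.2.2 hFC hcentral hx hy hxy)
  refine ⟨_ ++ L, ⟨⟨v, c, hcyc, hcodd, by simp⟩,
    List.IsChain.append (R := EarStep G) hchain hL.tail ?_⟩, ?_, List.prefix_append _ _⟩
  · simpa [hlast] using (List.isChain_cons.1 hL).1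
  · cases L with
    | nil => simpa [hlast] using hLtop
    | cons _ _ => simpa [List.getLast?_eq_some_getLast] using hLtop
end

section
/- In a 2-connected factor-critical graph with 2n+1 vertices, any placement p can be reconfigured by slide operations so that an arbitrarily chosen vertex v becomes the exposed vertex, using at most n slide operations. -/
open SimpleGraph

/-!
Fix a matching `M` covering every vertex but `v` (factor-criticality). While the exposed
vertex `u` is not `v`, its `M`-partner `x` is covered by some piece, which cannot lie on an
`M`-edge (the `M`-edge at `x` is `xu`, and `u` is exposed); sliding that piece onto `xu`
strictly decreases the number of pieces off `M`. At most `n` slides therefore expose `v`.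
-/

open Finset

theorem ReachableIn.exists_of_measure_lt {α : Type*} {r : α → α → Prop} {P : α → Prop}
    (μ : α → ℕ) (step : ∀ a, P a ∨ ∃ b, r a b ∧ μ b < μ a) (a : α) :
    ∃ b m, m ≤ μ a ∧ ReachableIn r m a b ∧ P b := by
  induction h : μ a using Nat.strong_induction_on generalizing a with
  | _ k ih =>
    rcases step a with ha | ⟨b, hab, hba⟩
    · exact ⟨a, 0, Nat.zero_le _, rfl, ha⟩
    · obtain ⟨c, m, hm, hbc, hc⟩ := ih (μ b) (h ▸ hba) b rfl
      exact ⟨c, m + 1, by omega, ⟨b, hab, hbc⟩, hc⟩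

namespace Placement

variable {V : Type*} {G : SimpleGraph V} {n : ℕ}

theorem card_biUnion_toFinset [DecidableEq V] (p : Placement G n) :
    #(univ.biUnion fun i => (p.f i).toFinset) = 2 * n := by
  have hdisj :
      ((univ : Finset (Fin n)) : Set (Fin n)).PairwiseDisjoint fun i => (p.f i).toFinset :=
    fun i _ j _ hij => Finset.disjoint_left.mpr fun x hi hj =>
      p.disj i j hij x (Sym2.mem_toFinset.mp hi) (Sym2.mem_toFinset.mp hj)
  rw [card_biUnion hdisj]
  simp [Sym2.card_toFinset_of_not_isDiag _ (G.not_isDiag_of_mem_edgeSet (p.mem_edgeSet _)),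
    mul_comm]

theorem existsUnique_exposes [Fintype V] (hcard : Fintype.card V = 2 * n + 1)
    (p : Placement G n) : ∃! u, p.exposes u := by
  classical
  set covered := univ.biUnion fun i => (p.f i).toFinset
  have hexposes : ∀ u, p.exposes u ↔ u ∈ coveredᶜ := by
    simp [covered, Placement.exposes]
  obtain ⟨u, hu⟩ := card_eq_one.mp (by
    rw [card_compl, p.card_biUnion_toFinset, hcard]; omega : #coveredᶜ = 1)
  exact ⟨u, (hexposes u).mpr (by simp [hu]), fun w hw => by simpa [hu] using (hexposes w).mp hw⟩

def slideTo (p : Placement G n) {j : Fin n} {x u : V} (hx : x ∈ p.f j) (hu : p.exposes u)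
    (hxu : G.Adj x u) : Placement G n where
  f := Function.update p.f j s(x, u)
  mem_edgeSet i := by
    rcases eq_or_ne i j with rfl | hij
    · simpa using hxu
    · simpa [hij] using p.mem_edgeSet i
  disj i i' hii' y := by
    have hfree : ∀ {k : Fin n}, k ≠ j → y ∈ p.f k → y ∉ s(x, u) := fun {k} hkj hy hyxu => by
      rcases Sym2.mem_iff.mp hyxu with rfl | rfl
      exacts [p.disj k j hkj y hy hx, hu k hy]
    rcases eq_or_ne i j with rfl | hij
    · simpa [hii'.symm] using fun hy hy' => hfree hii'.symm hy' hy
    rcases eq_or_ne i' j with rfl | hi'j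
    · simpa [hij] using hfree hij
    · simpa [hij, hi'j] using p.disj i i' hii' y

theorem slideTo_f_self (p : Placement G n) {j : Fin n} {x u : V} (hx : x ∈ p.f j)
    (hu : p.exposes u) (hxu : G.Adj x u) : (p.slideTo hx hu hxu).f j = s(x, u) := by
  simp [slideTo]

theorem slideTo_f_of_ne (p : Placement G n) {i j : Fin n} {x u : V} (hx : x ∈ p.f j)
    (hu : p.exposes u) (hxu : G.Adj x u) (hij : i ≠ j) :
    (p.slideTo hx hu hxu).f i = p.f i := by
  simp [slideTo, hij]

theorem slide_slideTo (p : Placement G n) {j : Fin n} {x u : V} (hx : x ∈ p.f j)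
    (hu : p.exposes u) (hxu : G.Adj x u) : Slide p (p.slideTo hx hu hxu) := by
  obtain ⟨y, hy⟩ := Sym2.mem_iff_exists.mp hx
  exact ⟨j, y, x, u, hu, hy.trans Sym2.eq_swap, hxu, p.slideTo_f_self hx hu hxu,
    fun i hij => p.slideTo_f_of_ne hx hu hxu hij⟩

open Classical in
noncomputable def offMatching (M : G.Subgraph) (p : Placement G n) : Finset (Fin n) :=
  {i | p.f i ∉ M.edgeSet}

theorem exists_slide_card_offMatching_lt {M : G.Subgraph} (hM : M.IsMatching)
    (p : Placement G n) {u x : V} (hu : p.exposes u) (hux : M.Adj u x)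
    (hx : ∃ j, x ∈ p.f j) :
    ∃ q, Slide p q ∧ #(q.offMatching M) < #(p.offMatching M) := by
  obtain ⟨j, hxj⟩ := hx
  set q := p.slideTo hxj hu (M.adj_sub hux.symm)
  have hj_off : p.f j ∉ M.edgeSet := fun hjM => by
    obtain ⟨y, hy⟩ := Sym2.mem_iff_exists.mp hxj
    rw [hy, Subgraph.mem_edgeSet] at hjM
    exact hu j (by rw [hy, hM.eq_of_adj_left hjM hux.symm]; exact Sym2.mem_mk_right x u)
  have hq_on : q.f j ∈ M.edgeSet := by
    rw [p.slideTo_f_self, Sym2.eq_swap]; exact hux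
  refine ⟨q, p.slide_slideTo _ _ _, card_lt_card ?_⟩
  refine (ssubset_iff_of_subset fun i hi => ?_).mpr ⟨j, by simpa [offMatching], by
    simpa [offMatching] using hq_on⟩
  have hij : i ≠ j := by rintro rfl; simp [offMatching, hq_on] at hi
  simpa [offMatching, q, p.slideTo_f_of_ne _ _ _ hij] using hi

theorem exposes_or_exists_slide_card_offMatching_lt [Fintype V]
    (hcard : Fintype.card V = 2 * n + 1) {M : G.Subgraph} (hM : M.IsMatching) {v : V}
    (hMv : M.verts = {v}ᶜ) (p : Placement G n) :
    p.exposes v ∨ ∃ q, Slide p q ∧ #(q.offMatching M) < #(p.offMatching M) := by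
  obtain ⟨u, hu, hunique⟩ := p.existsUnique_exposes hcard
  rcases eq_or_ne u v with rfl | huv
  · exact Or.inl hu
  obtain ⟨x, hux, -⟩ := hM (show u ∈ M.verts by simpa [hMv] using huv)
  have hx : ∃ j, x ∈ p.f j := by
    by_contra! hx
    exact (M.adj_sub hux).ne (hunique x hx).symm
  exact Or.inr (p.exists_slide_card_offMatching_lt hM hu hux hx)

end Placement

theorem stmt8_general {V : Type*} [Fintype V] (G : SimpleGraph V) (n : ℕ)
    (hcard : Fintype.card V = 2 * n + 1)
    (hFC : FactorCritical G)
    (p : Placement G n) (v : V) :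
    ∃ (q : Placement G n) (m : ℕ), m ≤ n ∧ ReachableIn Slide m p q ∧
      q.exposes v := by
  obtain ⟨M, hM, hMv⟩ := hFC v
  obtain ⟨q, m, hm, hpq, hq⟩ := ReachableIn.exists_of_measure_lt (fun q => #(q.offMatching M))
    (Placement.exposes_or_exists_slide_card_offMatching_lt hcard hM hMv) p
  exact ⟨q, m, hm.trans ((card_le_univ _).trans_eq (Fintype.card_fin n)), hpq, hq⟩

theorem stmt8 {V : Type*} [Fintype V] (G : SimpleGraph V) (n : ℕ)
    (hcard : Fintype.card V = 2 * n + 1)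
    (h2 : TwoConnected G) (hFC : FactorCritical G)
    (p : Placement G n) (v : V) :
    ∃ (q : Placement G n) (m : ℕ), m ≤ n ∧ ReachableIn Slide m p q ∧
      q.exposes v :=
  stmt8_general G n hcard hFC p v
end

section
/- Every tree with at least 3 vertices and maximum degree at most 3 either has a leaf adjacent to a vertex of degree 2, or has a vertex of degree 3 adjacent to at least 2 leaves. -/
/-!
In a tree on `n ≥ 2` vertices the degrees sum to `2n - 2`, so when all degrees lie in
`{1, 2, 3}` there are exactly two more leaves than vertices of degree 3. If no leaf is adjacent
to a vertex of degree 2, then every leaf is adjacent to a vertex of degree 3 (two adjacent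
leaves would form the whole tree, which has at least 3 vertices), and by pigeonhole two
leaves share that neighbour.
-/

open SimpleGraph Finset

namespace SimpleGraph

variable {V : Type*} {G : SimpleGraph V}

lemma neighborSet_subsingleton_of_degree_eq_one {v : V} [Fintype (G.neighborSet v)]
    (hv : G.degree v = 1) : (G.neighborSet v).Subsingleton := by
  obtain ⟨w, -, hw⟩ := degree_eq_one_iff_existsUnique_adj.mp hv
  exact fun a ha b hb => (hw a ha).trans (hw b hb).symm

lemma Preconnected.eq_or_eq_of_adj_of_degree_eq_one [G.LocallyFinite] (hG : G.Preconnected)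
    {u v : V} (huv : G.Adj u v) (hu : G.degree u = 1) (hv : G.degree v = 1) (w : V) :
    w = u ∨ w = v := by
  by_contra! hw
  obtain ⟨p, hp⟩ := hG.exists_isPath u w
  have hnil : ¬p.Nil := Walk.not_nil_of_ne hw.1.symm
  have hsnd : p.snd = v :=
    neighborSet_subsingleton_of_degree_eq_one hu (p.adj_snd hnil) huv
  refine hp.isTrail.not_mem_support_of_subsingleton_neighborSet huv.ne.symm hw.2.symm
    (neighborSet_subsingleton_of_degree_eq_one hv) ?_
  exact hsnd ▸ p.snd_mem_support_of_mem_edges (p.mk_start_snd_mem_edges hnil)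

lemma Preconnected.card_le_two_of_adj_of_degree_eq_one [Fintype V] [DecidableRel G.Adj]
    (hG : G.Preconnected) {u v : V} (huv : G.Adj u v) (hu : G.degree u = 1)
    (hv : G.degree v = 1) : Fintype.card V ≤ 2 := by
  have hsurj : Function.Surjective fun b : Bool => if b then u else v := fun w => by
    rcases hG.eq_or_eq_of_adj_of_degree_eq_one huv hu hv w with rfl | rfl
    exacts [⟨true, rfl⟩, ⟨false, rfl⟩]
  simpa using Fintype.card_le_of_surjective _ hsurj

lemma IsTree.sum_degree_sub_two [Fintype V] [DecidableRel G.Adj] (hG : G.IsTree) :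
    ∑ v, ((G.degree v : ℤ) - 2) = -2 := by
  have hedges := hG.card_edgeFinset
  have hsum := G.sum_degrees_eq_twice_card_edges
  rw [sum_sub_distrib, sum_const, card_univ]
  push_cast [← Nat.cast_sum, hsum, ← hedges]
  ring

lemma IsTree.card_degree_eq_one_of_degree_le_three [Fintype V] [Nontrivial V]
    [DecidableRel G.Adj] (hG : G.IsTree) (hdeg : ∀ v, G.degree v ≤ 3) :
    #{v | G.degree v = 1} = #{v | G.degree v = 3} + 2 := by
  have hsplit (v : V) : (G.degree v : ℤ) - 2 =
      (if G.degree v = 3 then 1 else 0) - (if G.degree v = 1 then 1 else 0) := by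
    have := hG.connected.preconnected.degree_pos_of_nontrivial v
    have := hdeg v
    interval_cases G.degree v <;> rfl
  have := hG.sum_degree_sub_two
  simp only [hsplit, sum_sub_distrib, sum_boole] at this
  omega

lemma exists_adj_adj_of_card_lt {s t : Finset V} (hs : ∀ u ∈ s, ∃ v ∈ t, G.Adj u v)
    (hst : #t < #s) : ∃ v ∈ t, ∃ u ∈ s, ∃ w ∈ s, u ≠ w ∧ G.Adj v u ∧ G.Adj v w := by
  choose! f hft hadj using hs
  obtain ⟨u, hu, w, hw, huw, hf⟩ := exists_ne_map_eq_of_card_lt_of_maps_to hst hft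
  exact ⟨f u, hft u hu, u, hu, w, hw, huw, (hadj u hu).symm, hf ▸ (hadj w hw).symm⟩

end SimpleGraph

theorem stmt14_general {V : Type*} [Fintype V]
    (G : SimpleGraph V) [DecidableRel G.Adj]
    (htree : G.Connected ∧ G.IsAcyclic)
    (hcard : 3 ≤ Fintype.card V)
    (hdeg : ∀ v : V, G.degree v ≤ 3) :
    -- a leaf adjacent to a vertex of degree 2, or
    (∃ u v : V, G.Adj u v ∧ G.degree u = 1 ∧ G.degree v = 2) ∨
    -- a vertex of degree 3 adjacent to at least 2 leaves
    (∃ v u w : V, G.degree v = 3 ∧ u ≠ w ∧ G.Adj v u ∧ G.Adj v w ∧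
      G.degree u = 1 ∧ G.degree w = 1) := by
  have hG : G.IsTree := ⟨htree.1, htree.2⟩
  have : Nontrivial V := Fintype.one_lt_card_iff_nontrivial.mp (by omega)
  by_cases hleaf_two : ∃ u v, G.Adj u v ∧ G.degree u = 1 ∧ G.degree v = 2
  · exact .inl hleaf_two
  push Not at hleaf_two
  have hleaf_three : ∀ u ∈ ({v | G.degree v = 1} : Finset V),
      ∃ v ∈ ({v | G.degree v = 3} : Finset V), G.Adj u v := by
    simp only [mem_filter, mem_univ, true_and]
    intro u hu
    obtain ⟨v, huv⟩ := (G.degree_pos_iff_exists_adj u).mp (by omega)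
    have hv_ne_one : G.degree v ≠ 1 := fun hv => by
      have := htree.1.preconnected.card_le_two_of_adj_of_degree_eq_one huv hu hv
      omega
    have hv_ne_two := hleaf_two u v huv hu
    have := htree.1.preconnected.degree_pos_of_nontrivial v
    exact ⟨v, by have := hdeg v; omega, huv⟩
  obtain ⟨v, hv, u, hu, w, hw, huw, hvu, hvw⟩ := exists_adj_adj_of_card_lt hleaf_three
    (by rw [hG.card_degree_eq_one_of_degree_le_three hdeg]; omega)
  simp only [mem_filter, mem_univ, true_and] at hv hu hw
  exact .inr ⟨v, u, w, hv, huw, hvu, hvw, hu, hw⟩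

theorem stmt14 {V : Type*} [Fintype V] [DecidableEq V]
    (G : SimpleGraph V) [DecidableRel G.Adj]
    (htree : G.Connected ∧ G.IsAcyclic)
    (hcard : 3 ≤ Fintype.card V)
    (hdeg : ∀ v : V, G.degree v ≤ 3) :
    -- a leaf adjacent to a vertex of degree 2, or
    (∃ u v : V, G.Adj u v ∧ G.degree u = 1 ∧ G.degree v = 2) ∨
    -- a vertex of degree 3 adjacent to at least 2 leaves
    (∃ v u w : V, G.degree v = 3 ∧ u ≠ w ∧ G.Adj v u ∧ G.Adj v w ∧
      G.degree u = 1 ∧ G.degree w = 1) :=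
  stmt14_general G htree hcard hdeg
end

section
/- Two cyclic permutations generate the full symmetric group condition: the subgroup of the symmetric group S_n generated by the n-cycle (1 2 ... n) and the m-cycle (1 2 ... m), where 2 ≤ m < n, equals S_n or A_n depending on parity; in particular, it acts transitively and contains all permutations when gcd conditions analogous to n−1 and m−1 being coprime hold. -/
/-!
Number the points `0, …, n-1`. The commutator `⁅σ, τ⁻¹⁆` of the rotation `σ = (0 1 … n-1)` and the initial cycle
`τ = (0 1 … m-1)` is the 3-cycle `(0 m m-1)`. The stabiliser of `0` in `⟨σ, τ⟩` contains
`σ τ σ⁻¹ = (1 … m)` and `τ⁻¹ σ = (m-1 … n-1)`; these cycles overlap, so the stabiliser is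
transitive on the other points, and `⟨σ, τ⟩` is 2-transitive, hence primitive. By Jordan's
theorem a primitive group containing a 3-cycle contains the alternating group, which has
index 2.
-/

open Equiv Equiv.Perm
open scoped commutatorElement

section MultiplyPretransitive

variable {α : Type*} {G : Subgroup (Perm α)}

theorem exists_mem_apply_eq_of_stabilizer {a b : α} (hab : ∃ g ∈ G, g a = b)
    (hstab : ∀ x ≠ a, ∃ g ∈ G, g a = a ∧ g b = x) (x : α) : ∃ g ∈ G, g a = x := by
  by_cases hx : x = a
  · exact ⟨1, G.one_mem, hx.symm⟩
  · obtain ⟨g, hg, -, hgb⟩ := hstab x hx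
    obtain ⟨h, hh, hha⟩ := hab
    exact ⟨g * h, G.mul_mem hg hh, by rw [Perm.mul_apply, hha, hgb]⟩

theorem isMultiplyPretransitive_two_of_stabilizer {a b : α} (hab : ∃ g ∈ G, g a = b)
    (hstab : ∀ x ≠ a, ∃ g ∈ G, g a = a ∧ g b = x) :
    MulAction.IsMultiplyPretransitive G α 2 := by
  rw [MulAction.is_two_pretransitive_iff]
  intro x y u v hxy huv
  obtain ⟨p, hp, rfl⟩ := exists_mem_apply_eq_of_stabilizer hab hstab x
  obtain ⟨q, hq, rfl⟩ := exists_mem_apply_eq_of_stabilizer hab hstab u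
  obtain ⟨r, hr, hra, hrb⟩ := hstab (p⁻¹ y) (by rw [ne_eq, Perm.inv_eq_iff_eq]; exact hxy.symm)
  obtain ⟨s, hs, hsa, hsb⟩ := hstab (q⁻¹ v) (by rw [ne_eq, Perm.inv_eq_iff_eq]; exact huv.symm)
  have hra' : r⁻¹ a = a := by rw [Perm.inv_eq_iff_eq, hra]
  have hrb' : r⁻¹ (p⁻¹ y) = b := by rw [Perm.inv_eq_iff_eq, hrb]
  refine ⟨⟨q * s * r⁻¹ * p⁻¹, G.mul_mem (G.mul_mem (G.mul_mem hq hs) (G.inv_mem hr))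
    (G.inv_mem hp)⟩, ?_, ?_⟩
  · change (q * s * r⁻¹ * p⁻¹) (p a) = q a
    rw [Perm.mul_apply, Perm.inv_def p, symm_apply_apply, Perm.mul_apply, hra', Perm.mul_apply,
      hsa]
  · change (q * s * r⁻¹ * p⁻¹) y = v
    rw [Perm.mul_apply, Perm.mul_apply, hrb', Perm.mul_apply, hsb, Perm.inv_def, apply_symm_apply]

end MultiplyPretransitive

theorem Subgroup.eq_top_or_eq_alternatingGroup_of_le {α : Type*} [Fintype α] [DecidableEq α]
    [Nontrivial α] {H : Subgroup (Perm α)} (hH : alternatingGroup α ≤ H) :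
    H = ⊤ ∨ H = alternatingGroup α := by
  have hdvd : H.index ∣ 2 := alternatingGroup.index_eq_two (α := α) ▸ index_dvd_of_le hH
  rcases (Nat.dvd_prime Nat.prime_two).mp hdvd with h | h
  · exact Or.inl (index_eq_one.mp h)
  · refine Or.inr (le_antisymm ?_ hH)
    have := relIndex_mul_index hH
    rw [h, alternatingGroup.index_eq_two] at this
    exact relIndex_eq_one.mp (by omega)

namespace Fin

variable {n : ℕ}

theorem coe_cycleRange (i j : Fin n) :
    (cycleRange i j : ℕ) = if (j : ℕ) < i then (j : ℕ) + 1 else if (j : ℕ) = i then 0 else j := by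
  rcases le_or_gt j i with h | h
  · rw [coe_cycleRange_of_le h]
    grind
  · rw [cycleRange_of_gt h]
    grind

theorem coe_cycleRange_inv (i j : Fin n) :
    ((cycleRange i)⁻¹ j : ℕ) =
      if (j : ℕ) = 0 then (i : ℕ) else if (j : ℕ) ≤ i then (j : ℕ) - 1 else j := by
  obtain ⟨k, rfl⟩ := (cycleRange i).surjective j
  rw [Perm.inv_def, symm_apply_apply, coe_cycleRange]
  grind

theorem eq_cycleRange_of_coe_apply {m : ℕ} (hm : 0 < m) (hmn : m ≤ n) (τ : Perm (Fin n))
    (hτ1 : ∀ i : Fin n, (i : ℕ) < m → ((τ i : Fin n) : ℕ) = ((i : ℕ) + 1) % m)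
    (hτ2 : ∀ i : Fin n, m ≤ (i : ℕ) → τ i = i) :
    τ = cycleRange ⟨m - 1, by omega⟩ := by
  ext i
  rw [coe_cycleRange]
  rcases lt_or_ge (i : ℕ) m with h | h
  · rw [hτ1 i h]
    obtain h' | h' : (i : ℕ) + 1 < m ∨ (i : ℕ) + 1 = m := by omega
    · rw [Nat.mod_eq_of_lt h']
      grind
    · rw [h', Nat.mod_self]
      grind
  · rw [hτ2 i h]
    grind

variable {i : Fin (n + 1)}

theorem commutatorElement_finRotate_cycleRange_inv (h0 : 0 < (i : ℕ)) (hi : (i : ℕ) < n) :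
    ⁅finRotate (n + 1), (cycleRange i)⁻¹⁆ = swap 0 i * swap 0 (i + 1) := by
  have hi1 : ((i + 1 : Fin (n + 1)) : ℕ) = i + 1 := val_add_one_of_lt' (by omega)
  rw [commutatorElement_def, inv_inv, ← cycleRange_last]
  ext j
  simp only [Perm.mul_apply, coe_cycleRange, coe_cycleRange_inv, swap_apply_def, val_last]
  grind

theorem exists_mem_closure_finRotate_cycleRange_fixing_zero (h0 : 0 < (i : ℕ))
    (hi : (i : ℕ) < n) {x : Fin (n + 1)} (hx : x ≠ 0) :
    ∃ g ∈ Subgroup.closure {finRotate (n + 1), cycleRange i}, g 0 = 0 ∧ g 1 = x := by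
  set H := Subgroup.closure {finRotate (n + 1), cycleRange i}
  have hσ : cycleRange (last n) ∈ H := by
    rw [cycleRange_last]
    exact Subgroup.subset_closure (by simp)
  have hτ : cycleRange i ∈ H := Subgroup.subset_closure (by simp)
  -- For `σ = cycleRange (last n)` and `τ = cycleRange i`, the cycles `σ τ σ⁻¹ = (1 … i+1)` and
  -- `τ⁻¹ σ = (i … n)` both fix `0`.
  have step : ∀ y : Fin (n + 1), 0 < (y : ℕ) → (y : ℕ) < n →
      ∃ g ∈ H, g 0 = 0 ∧ (g y : ℕ) = y + 1 := by
    intro y hy0 hyn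
    rcases le_or_gt (y : ℕ) i with h | h
    · refine ⟨cycleRange (last n) * cycleRange i * (cycleRange (last n))⁻¹,
        H.mul_mem (H.mul_mem hσ hτ) (H.inv_mem hσ), ?_, ?_⟩
      · ext
        simp only [Perm.mul_apply, coe_cycleRange, coe_cycleRange_inv, val_last, val_zero]
        grind
      · simp only [Perm.mul_apply, coe_cycleRange, coe_cycleRange_inv, val_last]
        grind
    · refine ⟨(cycleRange i)⁻¹ * cycleRange (last n), H.mul_mem (H.inv_mem hτ) hσ, ?_, ?_⟩
      · ext
        simp only [Perm.mul_apply, coe_cycleRange, coe_cycleRange_inv, val_last, val_zero]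
        grind
      · simp only [Perm.mul_apply, coe_cycleRange, coe_cycleRange_inv, val_last]
        grind
  have reach : ∀ k, 1 ≤ k → ∀ hk : k < n + 1, ∃ g ∈ H, g 0 = 0 ∧ g 1 = ⟨k, hk⟩ := by
    refine Nat.le_induction (fun hk => ⟨1, H.one_mem, rfl, Fin.ext (Nat.mod_eq_of_lt hk)⟩)
      fun k hk ih hk1 => ?_
    obtain ⟨g, hg, hg0, hg1⟩ := ih (by omega)
    obtain ⟨f, hf, hf0, hfk⟩ := step ⟨k, by omega⟩ hk (show k < n by omega)
    exact ⟨f * g, H.mul_mem hf hg, by rw [Perm.mul_apply, hg0, hf0],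
      by ext; rw [Perm.mul_apply, hg1, hfk]⟩
  exact reach x ((pos_iff_ne_zero' x).mpr hx) x.isLt

theorem isMultiplyPretransitive_closure_finRotate_cycleRange (h0 : 0 < (i : ℕ))
    (hi : (i : ℕ) < n) :
    MulAction.IsMultiplyPretransitive
      (Subgroup.closure {finRotate (n + 1), cycleRange i}) (Fin (n + 1)) 2 :=
  isMultiplyPretransitive_two_of_stabilizer
    ⟨finRotate (n + 1), Subgroup.subset_closure (by simp), finRotate_apply_zero⟩
    fun _ hx => exists_mem_closure_finRotate_cycleRange_fixing_zero h0 hi hx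

theorem alternatingGroup_le_closure_finRotate_cycleRange (h0 : 0 < (i : ℕ))
    (hi : (i : ℕ) < n) :
    alternatingGroup (Fin (n + 1)) ≤ Subgroup.closure {finRotate (n + 1), cycleRange i} := by
  set H := Subgroup.closure {finRotate (n + 1), cycleRange i}
  have hσ : finRotate (n + 1) ∈ H := Subgroup.subset_closure (by simp)
  have hτ : cycleRange i ∈ H := Subgroup.subset_closure (by simp)
  have hi1 : ((i + 1 : Fin (n + 1)) : ℕ) = i + 1 := val_add_one_of_lt' (by omega)
  refine alternatingGroup_le_of_isPreprimitive_of_isThreeCycle_mem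
    (MulAction.isPreprimitive_of_is_two_pretransitive
      (isMultiplyPretransitive_closure_finRotate_cycleRange h0 hi))
    (g := swap 0 i * swap 0 (i + 1)) ?_ ?_
  · apply isThreeCycle_swap_mul_swap_same <;> simp only [ne_eq, Fin.ext_iff, hi1, val_zero] <;>
      omega
  · rw [← commutatorElement_finRotate_cycleRange_inv h0 hi, commutatorElement_def, inv_inv]
    exact H.mul_mem (H.mul_mem (H.mul_mem hσ (H.inv_mem hτ)) (H.inv_mem hσ)) hτ

end Fin

theorem stmt16 (n m : ℕ) (h2 : 2 ≤ m) (hmn : m < n)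
    -- `τ` is the `m`-cycle `(1 2 … m)` on the first `m` elements, fixing the rest
    (τ : Equiv.Perm (Fin n))
    (hτ1 : ∀ i : Fin n, (i : ℕ) < m → ((τ i : Fin n) : ℕ) = ((i : ℕ) + 1) % m)
    (hτ2 : ∀ i : Fin n, m ≤ (i : ℕ) → τ i = i) :
    -- the subgroup generated by the `n`-cycle and the `m`-cycle acts transitively
    (∀ x y : Fin n, ∃ g ∈ Subgroup.closure ({finRotate n, τ} : Set (Equiv.Perm (Fin n))), g x = y) ∧
    -- and it is the full symmetric group or the alternating group (depending on
    -- parity) when `n−1` and `m−1` are coprime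
    (Nat.Coprime (n - 1) (m - 1) →
      Subgroup.closure ({finRotate n, τ} : Set (Equiv.Perm (Fin n))) = ⊤ ∨
      Subgroup.closure ({finRotate n, τ} : Set (Equiv.Perm (Fin n))) =
        alternatingGroup (Fin n)) := by
  obtain ⟨n, rfl⟩ : ∃ k, n = k + 1 := ⟨n - 1, by omega⟩
  obtain rfl := Fin.eq_cycleRange_of_coe_apply (by omega) hmn.le τ hτ1 hτ2
  have h0 : 0 < ((⟨m - 1, by omega⟩ : Fin (n + 1)) : ℕ) := by simp only; omega
  have hi : ((⟨m - 1, by omega⟩ : Fin (n + 1)) : ℕ) < n := by simp only; omega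
  have : Nontrivial (Fin (n + 1)) := Fin.nontrivial_iff_two_le.mpr (by omega)
  have htwo := Fin.isMultiplyPretransitive_closure_finRotate_cycleRange h0 hi
  refine ⟨fun x y => ?_, fun _ => Subgroup.eq_top_or_eq_alternatingGroup_of_le
    (Fin.alternatingGroup_le_closure_finRotate_cycleRange h0 hi)⟩
  obtain ⟨g, hg⟩ :=
    (MulAction.isPretransitive_of_is_two_pretransitive (h2 := htwo)).exists_smul_eq x y
  exact ⟨g, g.2, hg⟩
end

section
/- Let C be an odd cycle in a planar graph such that C bounds a connected region of triangular faces T', and let H be a Hamilton cycle of the graph. If two consecutive edges e_1, e_2 of the boundary cycle C share a vertex v all of whose incident triangles lie in T' and neither e_1 nor e_2 is in H, then H cannot pass through v: hence for each pair of consecutive boundary edges of T', at least one lies on H. -/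
open SimpleGraph

/-- The infinite triangular lattice on `ℤ × ℤ`. -/
def TriLattice : SimpleGraph (ℤ × ℤ) :=
  SimpleGraph.fromRel (fun a b =>
    b - a ∈ ({((1:ℤ),(0:ℤ)), ((0:ℤ),(1:ℤ)), ((1:ℤ),(-1:ℤ))} : Set (ℤ × ℤ)))

/-- A (unit) triangular face of the triangular lattice. -/
def IsTriangle (t : Finset (ℤ × ℤ)) : Prop :=
  ∃ p : ℤ × ℤ, t = {p, p + (1, 0), p + (0, 1)} ∨ t = {p, p + (1, 0), p + (1, -1)}

/-- The triangular faces of the grid graph induced on `S`. -/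
def Tris (S : Set (ℤ × ℤ)) : Set (Finset (ℤ × ℤ)) :=
  {t | IsTriangle t ∧ ↑t ⊆ S}

/-- `e = s(x,y)` is an edge of the triangle `t`. -/
def EdgeOfTri (t : Finset (ℤ × ℤ)) (e : Sym2 (ℤ × ℤ)) : Prop :=
  ∃ x y : ℤ × ℤ, x ≠ y ∧ e = s(x, y) ∧ x ∈ t ∧ y ∈ t

/-- `e` is a boundary edge of the region `T'`: it belongs to exactly one
triangle of `T'`. -/
def BoundaryEdge (T' : Set (Finset (ℤ × ℤ))) (e : Sym2 (ℤ × ℤ)) : Prop :=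
  ∃! t, t ∈ T' ∧ EdgeOfTri t e

/-!
Suppose `H` passes through `v` along the edge `vu`. Every face at `v` lies in `T'`, so the second
face on the boundary edge `vwᵢ` is missing from the grid, and `wᵢ` has degree at most one in the
link of `v`. If both faces on `vu` existed they would lie in `T'`; but the parity of the winding
number of `H` around a face is unchanged across edges off `H`, along which `T'` is connected, and
flips across the edge `vu` of `H`. Hence `u` has degree at most one in the link as well. A connected
link of maximum degree two (a path or a cycle) cannot have three such vertices.
-/

open Finset

lemma SimpleGraph.IsNClique.exists_eq_triple {V : Type*} [DecidableEq V] {G : SimpleGraph V}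
    {t : Finset V} {x y : V} (ht : G.IsNClique 3 t) (hx : x ∈ t) (hy : y ∈ t) (hxy : x ≠ y) :
    ∃ z, G.Adj x y ∧ G.Adj x z ∧ G.Adj y z ∧ t = {x, y, z} := by
  obtain ⟨z, hz, hzxy⟩ := exists_mem_notMem_of_card_lt_card (s := {x, y}) (t := t)
    (by rw [ht.card_eq, card_pair hxy]; norm_num)
  simp only [mem_insert, mem_singleton, not_or] at hzxy
  refine ⟨z, ht.isClique hx hy hxy, ht.isClique hx hz (Ne.symm hzxy.1),
    ht.isClique hy hz (Ne.symm hzxy.2), (eq_of_subset_of_card_le ?_ ?_).symm⟩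
  · intro w hw
    simp only [mem_insert, mem_singleton] at hw
    rcases hw with rfl | rfl | rfl <;> assumption
  · rw [ht.card_eq, card_insert_of_notMem (by simp [hxy, Ne.symm hzxy.1]),
      card_pair (Ne.symm hzxy.2)]

lemma SimpleGraph.Walk.sum_darts_eq_count_add_sub {V R : Type*} [DecidableEq V] [CommRing R]
    {G : SimpleGraph V} {e : Sym2 V} {f : V → V → R} (g : V → R)
    (hf : ∀ a b, G.Adj a b → f a b = (if s(a, b) = e then 1 else 0) + (g b - g a)) {u v : V}
    (p : G.Walk u v) :
    (p.darts.map fun d => f d.fst d.snd).sum = p.edges.count e + (g v - g u) := by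
  induction p with
  | nil => simp
  | cons h q ih =>
    simp only [Walk.darts_cons, Walk.edges_cons, List.map_cons, List.sum_cons, List.count_cons,
      ih, hf _ _ h, beq_iff_eq]
    push_cast
    ring

lemma SimpleGraph.Preconnected.eq_of_forall_adj {V α : Type*} {G : SimpleGraph V}
    (hG : G.Preconnected) {f : V → α} (hf : ∀ a b, G.Adj a b → f a = f b) (a b : V) :
    f a = f b := by
  obtain ⟨p⟩ := hG a b
  induction p with
  | nil => rfl
  | cons h _ ih => exact (hf _ _ h).trans ih

lemma SimpleGraph.degree_le_card_of_injective {V W : Type*} [DecidableEq W] {G : SimpleGraph V}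
    (z : V) [Fintype (G.neighborSet z)] {f : V → W} (hf : Function.Injective f) {A : Finset W}
    (hA : ∀ z', G.Adj z z' → f z' ∈ A) : G.degree z ≤ #A := by
  rw [← card_neighborFinset_eq_degree]
  exact card_le_card_of_injOn f (fun z' hz' => hA z' (by simpa using hz')) hf.injOn

lemma SimpleGraph.Connected.exists_two_lt_degree {V : Type*} [Fintype V] [DecidableEq V]
    {G : SimpleGraph V} [DecidableRel G.Adj] (hG : G.Connected) {u₁ u₂ u₃ : V}
    (h₁₂ : u₁ ≠ u₂) (h₁₃ : u₁ ≠ u₃) (h₂₃ : u₂ ≠ u₃)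
    (hd₁ : G.degree u₁ ≤ 1) (hd₂ : G.degree u₂ ≤ 1) (hd₃ : G.degree u₃ ≤ 1) :
    ∃ z, 2 < G.degree z := by
  by_contra! hdeg
  set A : Finset V := {u₁, u₂, u₃}
  have hA : #A = 3 := by
    rw [card_insert_of_notMem (by simp [h₁₂, h₁₃]), card_pair h₂₃]
  have hA_le : ∑ z ∈ A, G.degree z ≤ 3 := by
    rw [sum_insert (by simp [h₁₂, h₁₃]), sum_pair h₂₃]
    omega
  have hrest : ∑ z ∈ univ \ A, G.degree z ≤ #(univ \ A) * 2 :=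
    sum_le_card_nsmul _ _ _ fun z _ => hdeg z
  have hcard : #(univ \ A) + 3 = Fintype.card V := by
    rw [← hA, card_sdiff_add_card_eq_card (subset_univ A), card_univ]
  have hsum := G.sum_degrees_eq_twice_card_edges
  rw [← sum_sdiff (subset_univ A)] at hsum
  have hconn := hG.card_vert_le_card_edgeSet_add_one
  rw [Nat.card_eq_fintype_card, Nat.card_eq_fintype_card, ← edgeFinset_card] at hconn
  omega

lemma edgeOfTri_mk_iff {t : Finset (ℤ × ℤ)} {x y : ℤ × ℤ} :
    EdgeOfTri t s(x, y) ↔ x ≠ y ∧ x ∈ t ∧ y ∈ t := by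
  refine ⟨?_, fun ⟨hxy, hx, hy⟩ => ⟨x, y, hxy, rfl, hx, hy⟩⟩
  rintro ⟨x', y', hxy', he, hx', hy'⟩
  rcases Sym2.eq_iff.mp he with ⟨rfl, rfl⟩ | ⟨rfl, rfl⟩
  · exact ⟨hxy', hx', hy'⟩
  · exact ⟨hxy'.symm, hy', hx'⟩

namespace TriLattice

lemma adj_iff {x y : ℤ × ℤ} : TriLattice.Adj x y ↔
    (y.1 - x.1 = 1 ∧ y.2 - x.2 = 0) ∨ (y.1 - x.1 = 0 ∧ y.2 - x.2 = 1) ∨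
    (y.1 - x.1 = 1 ∧ y.2 - x.2 = -1) ∨ (y.1 - x.1 = -1 ∧ y.2 - x.2 = 0) ∨
    (y.1 - x.1 = 0 ∧ y.2 - x.2 = -1) ∨ (y.1 - x.1 = -1 ∧ y.2 - x.2 = 1) := by
  simp only [TriLattice, fromRel_adj, Set.mem_insert_iff, Set.mem_singleton_iff,
    Prod.ext_iff, Prod.fst_sub, Prod.snd_sub, ne_eq]
  omega

abbrev forwardSteps : Set (ℤ × ℤ) := {(1, 0), (0, 1), (1, -1)}

lemma adj_iff_sub_mem {x y : ℤ × ℤ} :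
    TriLattice.Adj x y ↔ x ≠ y ∧ (y - x ∈ forwardSteps ∨ x - y ∈ forwardSteps) :=
  fromRel_adj _ x y

lemma _root_.IsTriangle.isNClique {t : Finset (ℤ × ℤ)} (ht : IsTriangle t) :
    TriLattice.IsNClique 3 t := by
  obtain ⟨p, rfl | rfl⟩ := ht <;> rw [is3Clique_triple_iff] <;>
    simp only [adj_iff, Prod.fst_add, Prod.snd_add] <;> omega

/-- The third vertex of the face on the left of the dart `x → y`: it is `x + ρ (y - x)`, where
`ρ (a, b) = (-b, a + b)` is the rotation by `60°`. -/
def apex (x y : ℤ × ℤ) : ℤ × ℤ := (x.1 + x.2 - y.2, y.1 + y.2 - x.1)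

def tri (x y : ℤ × ℤ) : Finset (ℤ × ℤ) := {x, y, apex x y}

def IsInnerEdge (S : Set (ℤ × ℤ)) (v w : ℤ × ℤ) : Prop := apex v w ∈ S ∧ apex w v ∈ S

section Faces

variable {x y z : ℤ × ℤ}

lemma adj_apex_left (h : TriLattice.Adj x y) : TriLattice.Adj x (apex x y) := by
  rw [adj_iff] at h ⊢; simp only [apex]; omega

lemma adj_apex_right (h : TriLattice.Adj x y) : TriLattice.Adj y (apex x y) := by
  rw [adj_iff] at h ⊢; simp only [apex]; omega

lemma apex_ne_apex (h : TriLattice.Adj x y) : apex x y ≠ apex y x := by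
  rw [adj_iff] at h; simp only [apex, ne_eq, Prod.ext_iff]; omega

lemma eq_apex_or_eq_apex (hxy : TriLattice.Adj x y) (hxz : TriLattice.Adj x z)
    (hyz : TriLattice.Adj y z) : z = apex x y ∨ z = apex y x := by
  rw [adj_iff] at hxy hxz hyz; simp only [apex, Prod.ext_iff]; omega

lemma isTriangle_tri (h : TriLattice.Adj x y) : IsTriangle (tri x y) := by
  obtain ⟨x1, x2⟩ := x; obtain ⟨y1, y2⟩ := y
  rw [adj_iff] at h
  rcases h with ⟨h1, h2⟩ | ⟨h1, h2⟩ | ⟨h1, h2⟩ | ⟨h1, h2⟩ | ⟨h1, h2⟩ | ⟨h1, h2⟩ <;>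
  [refine ⟨(x1, x2), Or.inl ?_⟩; refine ⟨(x1 - 1, x2 + 1), Or.inr ?_⟩;
    refine ⟨(x1, x2), Or.inr ?_⟩; refine ⟨(x1 - 1, x2), Or.inr ?_⟩;
    refine ⟨(x1, x2 - 1), Or.inl ?_⟩; refine ⟨(x1 - 1, x2), Or.inl ?_⟩] <;>
  · ext ⟨w1, w2⟩
    simp only [tri, apex, mem_insert, mem_singleton, Prod.mk.injEq, Prod.mk_add_mk] at h1 h2 ⊢
    omega

lemma tri_mem_tris {S : Set (ℤ × ℤ)} (h : TriLattice.Adj x y) (hx : x ∈ S) (hy : y ∈ S)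
    (hxy : apex x y ∈ S) : tri x y ∈ Tris S :=
  ⟨isTriangle_tri h, by simp [tri, Set.insert_subset_iff, hx, hy, hxy]⟩

lemma tri_ne_tri (h : TriLattice.Adj x y) : tri x y ≠ tri y x := by
  intro heq
  have hmem : apex x y ∈ tri y x := heq ▸ by simp [tri]
  simp only [tri, mem_insert, mem_singleton] at hmem
  rcases hmem with hy | hx | h'
  · exact (adj_apex_right h).ne hy.symm
  · exact (adj_apex_left h).ne hx.symm
  · exact apex_ne_apex h h'

lemma sum_tri (h : TriLattice.Adj x y) : ∑ w ∈ tri x y, w = x + y + apex x y := by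
  rw [tri, sum_insert (by simp [h.ne, (adj_apex_left h).ne]), sum_pair (adj_apex_right h).ne,
    add_assoc]

lemma _root_.IsTriangle.eq_tri_or_eq_tri {t : Finset (ℤ × ℤ)} (ht : IsTriangle t) (hx : x ∈ t)
    (hy : y ∈ t) (hxy : x ≠ y) : TriLattice.Adj x y ∧ (t = tri x y ∨ t = tri y x) := by
  obtain ⟨z, hxy', hxz, hyz, rfl⟩ := ht.isNClique.exists_eq_triple hx hy hxy
  refine ⟨hxy', ?_⟩
  rcases eq_apex_or_eq_apex hxy' hxz hyz with rfl | rfl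
  · exact Or.inl rfl
  · exact Or.inr (insert_comm _ _ _)

end Faces

/-- Parity of the number of crossings of the segment `[a, b]` with the vertical ray going down
from `q / 3` (face centroids are a third of a lattice point). For a lattice edge with
`b.1 = a.1 + 1`, the slope of the segment is `b.2 - a.2`. -/
def rayCrossing (q a b : ℤ × ℤ) : ZMod 2 :=
  if (3 * a.1 < q.1 ∧ q.1 < 3 * b.1 ∧ 3 * a.2 + (q.1 - 3 * a.1) * (b.2 - a.2) < q.2) ∨
      (3 * b.1 < q.1 ∧ q.1 < 3 * a.1 ∧ 3 * b.2 + (q.1 - 3 * b.1) * (a.2 - b.2) < q.2)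
    then 1 else 0

/-- Correction term: the rays from the two faces on a vertical edge `xy` are separated by the
lattice points directly below the edge. -/
def belowVertical (x y w : ℤ × ℤ) : ZMod 2 :=
  if x.1 = y.1 ∧ w.1 = x.1 ∧ (w.2 < x.2 ∨ w.2 < y.2) then 1 else 0

lemma rayCrossing_comm (q a b : ℤ × ℤ) : rayCrossing q a b = rayCrossing q b a := by
  simp only [rayCrossing, or_comm]

lemma belowVertical_comm (x y w : ℤ × ℤ) : belowVertical x y w = belowVertical y x w :=
  if_congr (by omega) rfl rfl

lemma rayCrossing_right (q a : ℤ × ℤ) : rayCrossing q a (a + (1, 0)) =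
    if 3 * a.1 < q.1 ∧ q.1 < 3 * a.1 + 3 ∧ 3 * a.2 < q.2 then 1 else 0 := by
  simp only [rayCrossing, Prod.fst_add, Prod.snd_add, add_zero, sub_self, mul_zero]
  exact if_congr (by omega) rfl rfl

lemma rayCrossing_up (q a : ℤ × ℤ) : rayCrossing q a (a + (0, 1)) = 0 := by
  simp only [rayCrossing, Prod.fst_add, Prod.snd_add]
  exact if_neg (by omega)

lemma rayCrossing_downRight (q a : ℤ × ℤ) : rayCrossing q a (a + (1, -1)) =
    if 3 * a.1 < q.1 ∧ q.1 < 3 * a.1 + 3 ∧ 3 * a.2 + 3 * a.1 < q.2 + q.1 then 1 else 0 := by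
  simp only [rayCrossing, Prod.fst_add, Prod.snd_add, add_sub_cancel_left, mul_neg, mul_one]
  exact if_congr (by omega) rfl rfl

lemma rayCrossing_add_rayCrossing_of_mem {x d a d' : ℤ × ℤ}
    (hd : d ∈ forwardSteps) (hd' : d' ∈ forwardSteps) :
    rayCrossing (x + (x + d) + apex x (x + d)) a (a + d') +
        rayCrossing (x + (x + d) + apex (x + d) x) a (a + d') =
      (if s(a, a + d') = s(x, x + d) then 1 else 0) +
        (belowVertical x (x + d) (a + d') - belowVertical x (x + d) a) := by
  simp only [forwardSteps, Set.mem_insert_iff, Set.mem_singleton_iff] at hd hd'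
  rcases hd with rfl | rfl | rfl <;> rcases hd' with rfl | rfl | rfl <;>
  simp only [rayCrossing_right, rayCrossing_up, rayCrossing_downRight, belowVertical, apex,
    Sym2.eq_iff, Prod.ext_iff, Prod.fst_add, Prod.snd_add] <;>
  split_ifs <;> first | omega | decide


lemma rayCrossing_add_rayCrossing {x y a b : ℤ × ℤ} (hxy : TriLattice.Adj x y)
    (hab : TriLattice.Adj a b) :
    rayCrossing (x + y + apex x y) a b + rayCrossing (x + y + apex y x) a b =
      (if s(a, b) = s(x, y) then 1 else 0) + (belowVertical x y b - belowVertical x y a) := by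
  wlog hd : y - x ∈ forwardSteps generalizing x y with H
  · have hd' := (adj_iff_sub_mem.mp hxy).2.resolve_left hd
    rw [add_comm x y, add_comm (rayCrossing _ a b), Sym2.eq_swap (a := x), belowVertical_comm x y b,
      belowVertical_comm x y a]
    exact H hxy.symm hd'
  wlog hd' : b - a ∈ forwardSteps generalizing a b with H
  · have hd'' := (adj_iff_sub_mem.mp hab).2.resolve_left hd'
    rw [rayCrossing_comm _ a b, rayCrossing_comm _ a b, Sym2.eq_swap (a := a), H hab.symm hd'',
      ← neg_sub, ZMod.neg_eq_self_mod_two]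
  have := rayCrossing_add_rayCrossing_of_mem (x := x) (a := a) hd hd'
  rwa [add_sub_cancel, add_sub_cancel] at this

def windingParity (t : Finset (ℤ × ℤ)) {u v : ℤ × ℤ} (p : TriLattice.Walk u v) : ZMod 2 :=
  (p.darts.map fun d => rayCrossing (∑ w ∈ t, w) d.fst d.snd).sum

lemma windingParity_tri_add_windingParity_tri {x y u : ℤ × ℤ} (h : TriLattice.Adj x y)
    (p : TriLattice.Walk u u) :
    windingParity (tri x y) p + windingParity (tri y x) p = p.edges.count s(x, y) := by
  have := p.sum_darts_eq_count_add_sub (belowVertical x y)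
    fun a b hab => rayCrossing_add_rayCrossing h hab
  rw [sub_self, add_zero, List.sum_map_add] at this
  rwa [windingParity, windingParity, sum_tri h, sum_tri h.symm, add_comm y x]

lemma windingParity_add_windingParity {t t' : Finset (ℤ × ℤ)} {x y u : ℤ × ℤ}
    (ht : IsTriangle t) (ht' : IsTriangle t') (hne : t ≠ t') (hxy : x ≠ y) (hx : x ∈ t)
    (hy : y ∈ t) (hx' : x ∈ t') (hy' : y ∈ t') (p : TriLattice.Walk u u) :
    windingParity t p + windingParity t' p = p.edges.count s(x, y) := by
  obtain ⟨hadj, rfl | rfl⟩ := ht.eq_tri_or_eq_tri hx hy hxy <;>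
    obtain ⟨-, rfl | rfl⟩ := ht'.eq_tri_or_eq_tri hx' hy' hxy
  · exact absurd rfl hne
  · exact windingParity_tri_add_windingParity_tri hadj p
  · rw [add_comm]
    exact windingParity_tri_add_windingParity_tri hadj p
  · exact absurd rfl hne

lemma windingParity_eq_of_connected {T' : Set (Finset (ℤ × ℤ))} (hT' : ∀ t ∈ T', IsTriangle t)
    {H : Set (Sym2 (ℤ × ℤ))} {u : ℤ × ℤ} (p : TriLattice.Walk u u) (hpH : ∀ e ∈ p.edges, e ∈ H)
    (hconn : (fromRel fun t t' : T' => ∃ e, EdgeOfTri t.1 e ∧ EdgeOfTri t'.1 e ∧ e ∉ H).Connected)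
    (t t' : T') : windingParity t p = windingParity t' p := by
  refine hconn.preconnected.eq_of_forall_adj (f := fun t : T' => windingParity t p) ?_ t t'
  have key : ∀ t t' : T', t ≠ t' → (∃ e, EdgeOfTri t.1 e ∧ EdgeOfTri t'.1 e ∧ e ∉ H) →
      windingParity t p = windingParity t' p := by
    rintro t t' hne ⟨_, ⟨x, y, hxy, rfl, hx, hy⟩, hte', heH⟩
    obtain ⟨-, hx', hy'⟩ := edgeOfTri_mk_iff.mp hte'
    have := windingParity_add_windingParity (hT' t t.2) (hT' t' t'.2)
      (Subtype.coe_ne_coe.mpr hne) hxy hx hy hx' hy' p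
    rwa [List.count_eq_zero.mpr fun he => heH (hpH _ he), Nat.cast_zero, CharTwo.add_eq_zero]
      at this
  rintro t t' ⟨hne, h | h⟩
  · exact key t t' hne h
  · exact (key t' t hne.symm h).symm

abbrev link (S : Set (ℤ × ℤ)) (v : S) : SimpleGraph ((TriLattice.induce S).neighborSet v) :=
  (TriLattice.induce S).induce ((TriLattice.induce S).neighborSet v)

section Link

variable {S : Set (ℤ × ℤ)} {v : S}

lemma eq_apex_of_link_adj {z z' : (TriLattice.induce S).neighborSet v} (h : (link S v).Adj z z') :
    z'.1.1 = apex v z ∨ z'.1.1 = apex z v :=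
  eq_apex_or_eq_apex z.2 z'.2 h

lemma link_degree_le (z : (TriLattice.induce S).neighborSet v)
    [Fintype ((link S v).neighborSet z)] {A : Finset (ℤ × ℤ)}
    (hA : ∀ w ∈ S, w = apex v z ∨ w = apex z v → w ∈ A) : (link S v).degree z ≤ #A :=
  degree_le_card_of_injective z (f := fun z' => z'.1.1)
    (Subtype.val_injective.comp Subtype.val_injective)
    fun z' h => hA _ z'.1.2 (eq_apex_of_link_adj h)

lemma link_degree_le_two (z : (TriLattice.induce S).neighborSet v)
    [Fintype ((link S v).neighborSet z)] : (link S v).degree z ≤ 2 :=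
  (link_degree_le z (A := {apex v z, apex z v}) fun w _ hw => by simpa using hw).trans
    card_le_two

lemma link_degree_le_one (z : (TriLattice.induce S).neighborSet v)
    [Fintype ((link S v).neighborSet z)] (hz : ¬IsInnerEdge S v z) : (link S v).degree z ≤ 1 := by
  rw [IsInnerEdge, not_and_or] at hz
  rcases hz with hz | hz
  · refine (link_degree_le z (A := {apex z v}) ?_).trans (card_singleton _).le
    rintro w hw (rfl | rfl)
    · exact absurd hw hz
    · exact mem_singleton_self _
  · refine (link_degree_le z (A := {apex v z}) ?_).trans (card_singleton _).le
    rintro w hw (rfl | rfl)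
    · exact mem_singleton_self _
    · exact absurd hw hz

lemma eq_or_eq_of_not_isInnerEdge [Fintype S] (hconn : (link S v).Connected)
    {z₁ z₂ z₃ : (TriLattice.induce S).neighborSet v} (h₁ : ¬IsInnerEdge S v z₁)
    (h₂ : ¬IsInnerEdge S v z₂) (h₃ : ¬IsInnerEdge S v z₃) : z₁ = z₂ ∨ z₁ = z₃ ∨ z₂ = z₃ := by
  classical
  by_contra! hne
  obtain ⟨z, hz⟩ := hconn.exists_two_lt_degree hne.1 hne.2.1 hne.2.2
    (link_degree_le_one _ h₁) (link_degree_le_one _ h₂) (link_degree_le_one _ h₃)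
  exact hz.not_ge (link_degree_le_two z)

end Link

end TriLattice

open TriLattice

lemma BoundaryEdge.exists_not_isInnerEdge {S : Set (ℤ × ℤ)} {T' : Set (Finset (ℤ × ℤ))}
    (hT'sub : T' ⊆ Tris S) {v : S} (htri : ∀ t ∈ Tris S, (v : ℤ × ℤ) ∈ t → t ∈ T')
    {e : Sym2 (ℤ × ℤ)} (he : BoundaryEdge T' e) (hve : (v : ℤ × ℤ) ∈ e) :
    ∃ w : (TriLattice.induce S).neighborSet v, e = s((v : ℤ × ℤ), w.1.1) ∧ ¬IsInnerEdge S v w := by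
  obtain ⟨t, ⟨htT, hte⟩, huniq⟩ := he
  obtain ⟨w, rfl⟩ := Sym2.mem_iff_exists.mp hve
  obtain ⟨hvw, hvt, hwt⟩ := edgeOfTri_mk_iff.mp hte
  obtain ⟨ht, htS⟩ := hT'sub htT
  have hadj := (ht.eq_tri_or_eq_tri hvt hwt hvw).1
  refine ⟨⟨⟨w, htS hwt⟩, hadj⟩, rfl, fun ⟨h, h'⟩ => tri_ne_tri hadj ?_⟩
  have hunique : ∀ t' ∈ Tris S, (v : ℤ × ℤ) ∈ t' → w ∈ t' → t' = t := fun t' ht' hv hw =>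
    huniq t' ⟨htri t' ht' hv, edgeOfTri_mk_iff.mpr ⟨hvw, hv, hw⟩⟩
  rw [hunique _ (tri_mem_tris hadj v.2 (htS hwt) h) (by simp [tri]) (by simp [tri]),
    hunique _ (tri_mem_tris hadj.symm (htS hwt) v.2 h') (by simp [tri]) (by simp [tri])]

lemma not_isInnerEdge_of_mem_edges {S : Set (ℤ × ℤ)} {T' : Set (Finset (ℤ × ℤ))}
    {H : Set (Sym2 (ℤ × ℤ))} (hT'sub : T' ⊆ Tris S)
    (hT'conn : (fromRel fun t t' : T' => ∃ e, EdgeOfTri t.1 e ∧ EdgeOfTri t'.1 e ∧ e ∉ H).Connected)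
    {u : ℤ × ℤ} (p : TriLattice.Walk u u) (hp : p.edges.Nodup) (hpH : ∀ e ∈ p.edges, e ∈ H)
    {v w : ℤ × ℤ} (hv : v ∈ S) (hw : w ∈ S) (htri : ∀ t ∈ Tris S, v ∈ t → t ∈ T')
    (hvw : s(v, w) ∈ p.edges) : ¬IsInnerEdge S v w := by
  rintro ⟨h, h'⟩
  have hadj : TriLattice.Adj v w := p.adj_of_mem_edges hvw
  have heq := windingParity_eq_of_connected (fun t ht => (hT'sub ht).1) p hpH hT'conn
    ⟨_, htri _ (tri_mem_tris hadj hv hw h) (by simp [tri])⟩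
    ⟨_, htri _ (tri_mem_tris hadj.symm hw hv h') (by simp [tri])⟩
  have hsum := windingParity_tri_add_windingParity_tri hadj p
  rw [heq, CharTwo.add_self_eq_zero, List.count_eq_one_of_mem hp hvw, Nat.cast_one] at hsum
  exact zero_ne_one hsum

theorem stmt18_general (S : Set (ℤ × ℤ)) [Fintype S]
    -- the graph is locally-connected
    (hlc : ∀ u : S, ((TriLattice.induce S).induce
      ((TriLattice.induce S).neighborSet u)).Connected)
    -- a Hamilton cycle `H`
    (v0 : S) (c : (TriLattice.induce S).Walk v0 v0)
    (hham : c.IsHamiltonianCycle)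
    (Hedges : Set (Sym2 (ℤ × ℤ)))
    (hHedges : Hedges = {e | ∃ e' ∈ c.edges, e = e'.map Subtype.val})
    -- a connected region `T'` of triangular faces, all on one side of `H`
    (T' : Set (Finset (ℤ × ℤ))) (hT'sub : T' ⊆ Tris S)
    (hT'conn : (SimpleGraph.fromRel (fun t t' : T' =>
      ∃ e, EdgeOfTri t.1 e ∧ EdgeOfTri t'.1 e ∧ e ∉ Hedges)).Connected)
    -- two consecutive boundary edges `e₁, e₂` sharing the vertex `v`
    (e₁ e₂ : Sym2 (ℤ × ℤ)) (he₁ : BoundaryEdge T' e₁) (he₂ : BoundaryEdge T' e₂)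
    (hne : e₁ ≠ e₂) (v : S) (hv₁ : (v : ℤ × ℤ) ∈ e₁) (hv₂ : (v : ℤ × ℤ) ∈ e₂)
    -- all triangles incident to `v` lie in `T'`
    (htri : ∀ t ∈ Tris S, (v : ℤ × ℤ) ∈ t → t ∈ T')
    -- and neither `e₁` nor `e₂` lies on `H`
    (h₁ : e₁ ∉ Hedges) (h₂ : e₂ ∉ Hedges) :
    -- then `H` cannot pass through `v`
    v ∉ c.support := by
  intro hv
  set c' := c.map (Embedding.induce S).toHom
  have hc'H : ∀ e ∈ c'.edges, e ∈ Hedges := by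
    intro e he
    obtain ⟨e', he', rfl⟩ := List.mem_map.mp (Walk.edges_map _ c ▸ he)
    exact hHedges ▸ ⟨e', he', rfl⟩
  have hnodup : c'.edges.Nodup := Walk.edges_map _ c ▸
    hham.isCycle.edges_nodup.map (Sym2.map.injective Subtype.val_injective)
  obtain ⟨w₁, rfl, hw₁⟩ := he₁.exists_not_isInnerEdge hT'sub htri hv₁
  obtain ⟨w₂, rfl, hw₂⟩ := he₂.exists_not_isInnerEdge hT'sub htri hv₂
  obtain ⟨_, hvu, hve⟩ :=
    (Walk.mem_support_iff_exists_mem_edges_of_not_nil hham.isCycle.not_nil).mp hv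
  obtain ⟨u, rfl⟩ := Sym2.mem_iff_exists.mp hve
  have hvuH : s(v.1, u.1) ∈ c'.edges := Walk.edges_map _ c ▸ List.mem_map_of_mem hvu
  have hu := not_isInnerEdge_of_mem_edges hT'sub hT'conn c' hnodup hc'H v.2 u.2 htri hvuH
  rcases eq_or_eq_of_not_isInnerEdge (hlc v) hw₁ hw₂ (z₃ := ⟨u, c.adj_of_mem_edges hvu⟩) hu
    with h | h | h
  · exact hne (by rw [h])
  · exact h₁ (by rw [h]; exact hc'H _ hvuH)
  · exact h₂ (by rw [h]; exact hc'H _ hvuH)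

theorem stmt18 (S : Set (ℤ × ℤ)) [Fintype S]
    (hconn : (TriLattice.induce S).Connected)
    -- the graph is locally-connected
    (hlc : ∀ u : S, ((TriLattice.induce S).induce
      ((TriLattice.induce S).neighborSet u)).Connected)
    -- a Hamilton cycle `H`
    (v0 : S) (c : (TriLattice.induce S).Walk v0 v0)
    (hham : c.IsHamiltonianCycle)
    (Hedges : Set (Sym2 (ℤ × ℤ)))
    (hHedges : Hedges = {e | ∃ e' ∈ c.edges, e = e'.map Subtype.val})
    -- a connected region `T'` of triangular faces, all on one side of `H`
    (T' : Set (Finset (ℤ × ℤ))) (hT'sub : T' ⊆ Tris S)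
    (hT'conn : (SimpleGraph.fromRel (fun t t' : T' =>
      ∃ e, EdgeOfTri t.1 e ∧ EdgeOfTri t'.1 e ∧ e ∉ Hedges)).Connected)
    -- two consecutive boundary edges `e₁, e₂` sharing the vertex `v`
    (e₁ e₂ : Sym2 (ℤ × ℤ)) (he₁ : BoundaryEdge T' e₁) (he₂ : BoundaryEdge T' e₂)
    (hne : e₁ ≠ e₂) (v : S) (hv₁ : (v : ℤ × ℤ) ∈ e₁) (hv₂ : (v : ℤ × ℤ) ∈ e₂)
    -- all triangles incident to `v` lie in `T'`
    (htri : ∀ t ∈ Tris S, (v : ℤ × ℤ) ∈ t → t ∈ T')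
    -- and neither `e₁` nor `e₂` lies on `H`
    (h₁ : e₁ ∉ Hedges) (h₂ : e₂ ∉ Hedges) :
    -- then `H` cannot pass through `v`
    v ∉ c.support :=
  stmt18_general S hlc v0 c hham Hedges hHedges T' hT'sub hT'conn e₁ e₂ he₁ he₂ hne v hv₁ hv₂ htri
    h₁ h₂
end
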